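/- arXiv:2111.06675 — 5 statements merged into one kernel-verified Lean document; each statement's English description precedes it below -/
import Mathlib

section
/- Let p be a prime, n ≥ 1, 1 ≤ t ≤ n, let {V_1,…,V_t} be a partition of {1,…,n} into nonempty sets with m_r = |V_r|, and let π_r : {1,…,m_r} → V_r be bijections. Fix d_1,…,d_n ∈ Z_p and define the EBF f : (Z_p)^n → Z_p by f(x) = Σ_{r=1}^t Σ_{α=1}^{m_r−1} x_{π_r(α)} x_{π_r(α+1)} + Σ_{α=1}^n d_α x_α (arithmetic in Z_p). For h = (h_1,…,h_t) ∈ (Z_p)^t let C_h be the ordered family of p^t sequences c_h^s = ψ(f + Σ_{r=1}^t s_r x_{π_r(1)} + Σ_{r=1}^t h_r x_{π_r(m_r)}), indexed by s = (s_1,…,s_t) ∈ (Z_p)^t. Then {C_h : h ∈ (Z_p)^t} is a (p^t, p^t, p^n)-CCC: for all h, h′ ∈ (Z_p)^t and all integers u with |u| < p^n, Σ_{s∈(Z_p)^t} γ(c_h^s, c_{h′}^s)(u) equals p^{n+t} if h = h′ and u = 0, and equals 0 if h = h′ and u ≠ 0, and equals 0 for every u if h ≠ h′. -/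
/-!
Write each correlation as a sum over pairs `(x, x + z)` of digit vectors. Summing
`ω^{-Σ_r s_r z_{π_r(1)}}` over `s` first leaves only the `z` that vanish at the heads of all paths,
each with weight `p^t`. For `z = 0` only `u = 0` is possible and the phase is the linear form
`Σ_r (h_r - h'_r) x_{π_r(m_r)}`, whose character sum is `p^n [h = h']`.
For `z ≠ 0`, take a nonzero entry `z_{π_r(α)}` with `α` minimal; then `α > 1`, and translating `x`
by a unit vector at `π_r(α - 1)` keeps the integer shift `u` (both digit vectors change at a place
where they agree) while, by the path shape of the quadratic part of `f`, multiplying the summand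
by the constant `ω^{-z_{π_r(α)}} ≠ 1`. So that part of the sum vanishes.
-/

open Finset

/-- The `k`-th base-`p` digit of `x`, viewed as an element of `ZMod p`
(so `x = ∑ₖ xₖ pᵏ` with `xₖ = digitZ p x k`). -/
def digitZ (p x k : ℕ) : ZMod p := ((x / p ^ k) % p : ℕ)

/-- The complex-valued sequence `ψ(f)` of length `p^m` associated with an
extended Boolean function `f : (Z_p)^m → Z_p`: its `x`-th entry is `ω^{f(x₁,…,x_m)}`
where `ω = exp(2πi/p)` and `(x₁,…,x_m)` are the base-`p` digits of `x`. -/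
noncomputable def psiSeq (p m : ℕ) (f : (Fin m → ZMod p) → ZMod p) : ℕ → ℂ :=
  fun x =>
    Complex.exp (2 * Real.pi * Complex.I * ((f fun k => digitZ p x (k : ℕ)).val : ℂ) / p)

/-- Aperiodic cross-correlation of two length-`L` complex sequences at integer shift `u`:
`γ(a,b)(u) = ∑_{0 ≤ i, j < L, j - i = u} a i * conj (b j)`, which agrees with the usual
piecewise definition for `|u| < L`. -/
noncomputable def aper (L : ℕ) (a b : ℕ → ℂ) (u : ℤ) : ℂ :=
  ∑ i ∈ Finset.range L, ∑ j ∈ Finset.range L,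
    if (j : ℤ) - (i : ℤ) = u then a i * (starRingEnd ℂ) (b j) else 0

open Function

section Characters

variable {p : ℕ} [NeZero p]

theorem ZMod.sum_stdAddChar_eq_zero_of_add_right {β : Type*} [AddCommGroup β] (S : Finset β)
    (Φ : β → ZMod p) (w : β) {δ : ZMod p} (hδ : δ ≠ 0) (hS : ∀ x, x + w ∈ S ↔ x ∈ S)
    (hΦ : ∀ x ∈ S, Φ (x + w) = Φ x + δ) :
    ∑ x ∈ S, ZMod.stdAddChar (Φ x) = 0 := by
  have hne : ZMod.stdAddChar δ ≠ (1 : ℂ) := by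
    rw [← AddChar.map_zero_eq_one (ZMod.stdAddChar (N := p))]
    exact ZMod.injective_stdAddChar.ne hδ
  have hinv : ∑ x ∈ S, ZMod.stdAddChar (Φ x)
      = ZMod.stdAddChar δ * ∑ x ∈ S, ZMod.stdAddChar (Φ x) := calc
    _ = ∑ x ∈ S, ZMod.stdAddChar (Φ (x + w)) :=
      (Finset.sum_equiv (Equiv.addRight w) (fun x => (hS x).symm) fun _ _ => rfl).symm
    _ = _ := by
      rw [Finset.mul_sum]
      refine Finset.sum_congr rfl fun x hx => ?_
      rw [hΦ x hx, AddChar.map_add_eq_mul, mul_comm]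
  by_contra hT
  exact hne (mul_right_cancel₀ hT (hinv.symm.trans (one_mul _).symm))

theorem ZMod.sum_stdAddChar_linear {ι κ : Type*} [Fintype ι] [DecidableEq ι] [Fintype κ]
    {ℓ : κ → ι} (hℓ : Injective ℓ) (c : κ → ZMod p) :
    ∑ x : ι → ZMod p, ZMod.stdAddChar (∑ r, c r * x (ℓ r)) =
      if c = 0 then (p : ℂ) ^ Fintype.card ι else 0 := by
  split_ifs with hc
  · simp [hc]
  · classical
    obtain ⟨r₀, hr₀⟩ := Function.ne_iff.1 hc
    refine ZMod.sum_stdAddChar_eq_zero_of_add_right univ _ (Pi.single (ℓ r₀) 1) hr₀ (by simp)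
      fun x _ => ?_
    simp [mul_add, sum_add_distrib, Pi.single_apply, hℓ.eq_iff]

end Characters

section Digits

variable {p : ℕ} [NeZero p] {n : ℕ}

def digitsEquiv (p n : ℕ) [NeZero p] : (Fin n → ZMod p) ≃ Fin (p ^ n) :=
  (Equiv.piCongrRight fun _ => (ZMod.finEquiv p).symm.toEquiv).trans finFunctionFinEquiv

lemma ZMod.val_finEquiv_symm (a : ZMod p) : ((ZMod.finEquiv p).symm a : ℕ) = a.val := by
  obtain ⟨k, rfl⟩ : ∃ k, p = k + 1 := Nat.exists_eq_succ_of_ne_zero (NeZero.ne p)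
  rfl

lemma digitsEquiv_val (x : Fin n → ZMod p) :
    (digitsEquiv p n x : ℕ) = ∑ k, (x k).val * p ^ (k : ℕ) := by
  simp [digitsEquiv, ZMod.val_finEquiv_symm]

lemma digitZ_digitsEquiv (x : Fin n → ZMod p) (k : Fin n) :
    digitZ p (digitsEquiv p n x) k = x k := by
  rw [digitZ, ← finFunctionFinEquiv_symm_apply_val, digitsEquiv, Equiv.trans_apply,
    Equiv.symm_apply_apply]
  simp [ZMod.val_finEquiv_symm]

lemma psiSeq_digitsEquiv (g : (Fin n → ZMod p) → ZMod p) (x : Fin n → ZMod p) :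
    psiSeq p n g (digitsEquiv p n x) = ZMod.stdAddChar (g x) := by
  simp only [psiSeq, digitZ_digitsEquiv, ZMod.stdAddChar_apply, ZMod.toCircle_apply]

lemma digitsEquiv_add_single (x : Fin n → ZMod p) (k : Fin n) (c : ZMod p) :
    ((digitsEquiv p n (x + Pi.single k c) : ℕ) : ℤ) - (digitsEquiv p n x : ℕ)
      = (((x k + c).val : ℤ) - (x k).val) * p ^ (k : ℕ) := by
  rw [digitsEquiv_val, digitsEquiv_val]
  push_cast
  rw [← sum_sub_distrib, Fintype.sum_eq_single k]
  · simp [sub_mul]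
  · intro i hi
    simp [hi]

end Digits

section Correlation

variable {p : ℕ} [NeZero p] {n : ℕ}

noncomputable def aperSlice (F F' : (Fin n → ZMod p) → ZMod p) (u : ℤ) (z : Fin n → ZMod p) : ℂ :=
  ∑ x, if ((digitsEquiv p n (x + z) : ℕ) : ℤ) - (digitsEquiv p n x : ℕ) = u then
    ZMod.stdAddChar (F x - F' (x + z)) else 0

lemma aper_psiSeq_eq_sum_aperSlice (F F' : (Fin n → ZMod p) → ZMod p) (u : ℤ) :
    aper (p ^ n) (psiSeq p n F) (psiSeq p n F') u = ∑ z, aperSlice F F' u z := by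
  have hre : ∀ φ : ℕ → ℂ, ∑ i ∈ range (p ^ n), φ i = ∑ x, φ (digitsEquiv p n x) := fun φ => by
    rw [← Fin.sum_univ_eq_sum_range]
    exact ((digitsEquiv p n).sum_comp fun i => φ i).symm
  calc aper (p ^ n) (psiSeq p n F) (psiSeq p n F') u
      = ∑ x, ∑ y, if ((digitsEquiv p n y : ℕ) : ℤ) - (digitsEquiv p n x : ℕ) = u then
          psiSeq p n F (digitsEquiv p n x) * (starRingEnd ℂ) (psiSeq p n F' (digitsEquiv p n y))
          else 0 := by
        simp only [aper, hre]
    _ = ∑ x, ∑ z, if ((digitsEquiv p n (x + z) : ℕ) : ℤ) - (digitsEquiv p n x : ℕ) = u then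
          psiSeq p n F (digitsEquiv p n x) *
            (starRingEnd ℂ) (psiSeq p n F' (digitsEquiv p n (x + z))) else 0 :=
        sum_congr rfl fun x _ => (Equiv.sum_comp (Equiv.addLeft x) _).symm
    _ = ∑ z, aperSlice F F' u z := by
        rw [sum_comm]
        simp only [aperSlice, psiSeq_digitsEquiv, ← AddChar.map_neg_eq_conj,
          ← AddChar.map_add_eq_mul, ← sub_eq_add_neg]

lemma aperSlice_zero (F F' : (Fin n → ZMod p) → ZMod p) (u : ℤ) :
    aperSlice F F' u 0 = if u = 0 then ∑ x, ZMod.stdAddChar (F x - F' x) else 0 := by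
  simp only [aperSlice, add_zero, sub_self]
  by_cases hu : u = 0 <;> simp [hu, Ne.symm]

def addLinear {ι κ R : Type*} [CommRing R] [Fintype κ] (F : (ι → R) → R) (ℓ : κ → ι)
    (c : κ → R) (x : ι → R) : R :=
  F x + ∑ r, c r * x (ℓ r)

lemma sum_aper_psiSeq_addLinear {t : ℕ} (F F' : (Fin n → ZMod p) → ZMod p) (ℓ : Fin t → Fin n)
    (u : ℤ) :
    ∑ s : Fin t → ZMod p,
        aper (p ^ n) (psiSeq p n (addLinear F ℓ s)) (psiSeq p n (addLinear F' ℓ s)) u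
      = p ^ t * ∑ z, if ∀ r, z (ℓ r) = 0 then aperSlice F F' u z else 0 := by
  have hslice : ∀ s z, aperSlice (addLinear F ℓ s) (addLinear F' ℓ s) u z
      = aperSlice F F' u z * ZMod.stdAddChar (∑ r, -z (ℓ r) * s r) := by
    intro s z
    rw [aperSlice, aperSlice, sum_mul]
    refine sum_congr rfl fun x _ => ?_
    rw [ite_mul, zero_mul, ← AddChar.map_add_eq_mul]
    congr 2
    simp only [addLinear, Pi.add_apply, add_mul, sum_add_distrib, neg_mul, sum_neg_distrib,
      mul_comm (s _)]
    ring
  have hchar : ∀ z : Fin n → ZMod p, ∑ s : Fin t → ZMod p, ZMod.stdAddChar (∑ r, -z (ℓ r) * s r)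
      = if ∀ r, z (ℓ r) = 0 then (p : ℂ) ^ t else 0 := fun z =>
    (ZMod.sum_stdAddChar_linear injective_id _).trans (by simp [funext_iff])
  simp_rw [aper_psiSeq_eq_sum_aperSlice, hslice]
  rw [sum_comm, mul_sum]
  refine sum_congr rfl fun z _ => ?_
  rw [← mul_sum, hchar]
  split_ifs <;> ring

end Correlation

section Paths

variable {n t : ℕ} (m : Fin t → ℕ) (π : Fin t → ℕ → Fin n)

lemma index_eq_of_vertex_eq (hπ : Injective fun q : Σ r, Fin (m r) => π q.1 q.2)
    {r r' : Fin t} {a a' : ℕ} (ha : a < m r) (ha' : a' < m r') (h : π r a = π r' a') :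
    r = r' ∧ a = a' := by
  obtain ⟨rfl, h'⟩ := Sigma.mk.inj_iff.1 (hπ (a₁ := ⟨r, a, ha⟩) (a₂ := ⟨r', a', ha'⟩) h)
  exact ⟨rfl, congrArg Fin.val (eq_of_heq h')⟩

lemma injective_last_vertex (hm : ∀ r, 1 ≤ m r)
    (hπ : Injective fun q : Σ r, Fin (m r) => π q.1 q.2) :
    Injective fun r => π r (m r - 1) := fun r r' h =>
  (index_eq_of_vertex_eq m π hπ (by have := hm r; omega) (by have := hm r'; omega) h).1

lemma exists_min_index_of_ne_zero {R : Type*} [Zero R]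
    (hπ : Surjective fun q : Σ r, Fin (m r) => π q.1 q.2) {z : Fin n → R} (hz : z ≠ 0) :
    ∃ r₀ α, α < m r₀ ∧ z (π r₀ α) ≠ 0 ∧ ∀ r β, β < α → β < m r → z (π r β) = 0 := by
  classical
  obtain ⟨k, hk⟩ := Function.ne_iff.1 hz
  obtain ⟨q, rfl⟩ := hπ k
  obtain ⟨q₀, hq₀, hmin⟩ :=
    (univ.filter fun q : Σ r, Fin (m r) => z (π q.1 q.2) ≠ 0).exists_min_image
      (fun q => (q.2 : ℕ)) ⟨q, by simpa using hk⟩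
  refine ⟨q₀.1, q₀.2, q₀.2.isLt, (mem_filter.1 hq₀).2, fun r β hβ hβm => ?_⟩
  by_contra hne
  exact absurd (hmin ⟨r, β, hβm⟩ (by simpa using hne)) (by simpa using hβ)

variable {R : Type*} [CommRing R]

def pathPolar (z w : Fin n → R) : R :=
  ∑ r, ∑ β ∈ range (m r - 1), (z (π r β) * w (π r (β + 1)) + w (π r β) * z (π r (β + 1)))

lemma second_diff_eq_pathPolar (d : Fin n → R) {f : (Fin n → R) → R}
    (hf : ∀ x, f x =
      (∑ r, ∑ α ∈ range (m r - 1), x (π r α) * x (π r (α + 1))) + ∑ α, d α * x α)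
    (x z w : Fin n → R) :
    f (x + z + w) - f (x + w) - f (x + z) + f x = pathPolar m π z w := by
  simp only [hf, pathPolar, Pi.add_apply, add_mul, mul_add, sum_add_distrib]
  ring

lemma pathPolar_single (hπ : Injective fun q : Σ r, Fin (m r) => π q.1 q.2) {z : Fin n → R}
    {r₀ : Fin t} {α : ℕ} (hα : 1 ≤ α) (hαm : α < m r₀)
    (hz : ∀ r β, β < α → β < m r → z (π r β) = 0) :
    pathPolar m π z (Pi.single (π r₀ (α - 1)) 1) = z (π r₀ α) := by
  have hsingle : ∀ r β, β < m r →
      (Pi.single (π r₀ (α - 1)) 1 : Fin n → R) (π r β) = if r = r₀ ∧ β = α - 1 then 1 else 0 := by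
    intro r β hβ
    simp only [Pi.single_apply]
    refine if_congr ⟨fun h => index_eq_of_vertex_eq m π hπ hβ (by omega) h, ?_⟩ rfl rfl
    rintro ⟨rfl, rfl⟩
    rfl
  have hterm : ∀ r, ∀ β ∈ range (m r - 1),
      z (π r β) * (Pi.single (π r₀ (α - 1)) 1 : Fin n → R) (π r (β + 1))
          + (Pi.single (π r₀ (α - 1)) 1 : Fin n → R) (π r β) * z (π r (β + 1))
        = if r = r₀ ∧ β = α - 1 then z (π r₀ α) else 0 := by
    intro r β hβ
    have hβ := mem_range.1 hβ
    rw [hsingle r (β + 1) (by omega), hsingle r β (by omega)]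
    by_cases hr : r = r₀ ∧ β = α - 1
    · obtain ⟨rfl, rfl⟩ := hr
      simp [show α - 1 + 1 = α by omega, show α ≠ α - 1 by omega]
    · rw [if_neg hr, if_neg hr]
      split_ifs with h1
      · rw [hz r β (by omega) (by omega)]
        ring
      · ring
  rw [pathPolar, sum_congr rfl fun r _ => sum_congr rfl (hterm r)]
  simp [ite_and, show α - 1 < m r₀ - 1 by omega]

end Paths

section PathEBF

variable {p : ℕ} [NeZero p] {n t : ℕ} (m : Fin t → ℕ) (π : Fin t → ℕ → Fin n)

lemma sum_stdAddChar_addLinear_sub {ι κ : Type*} [Fintype ι] [DecidableEq ι] [Fintype κ]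
    (F : (ι → ZMod p) → ZMod p) {ℓ : κ → ι} (hℓ : Injective ℓ) (c c' : κ → ZMod p) :
    ∑ x, ZMod.stdAddChar (addLinear F ℓ c x - addLinear F ℓ c' x) =
      if c = c' then (p : ℂ) ^ Fintype.card ι else 0 := by
  have hlin : ∀ x, addLinear F ℓ c x - addLinear F ℓ c' x = ∑ r, (c - c') r * x (ℓ r) := by
    intro x
    simp only [addLinear, Pi.sub_apply, sub_mul, sum_sub_distrib]
    ring
  simp_rw [hlin, ZMod.sum_stdAddChar_linear hℓ, sub_eq_zero]

lemma aperSlice_eq_zero (hm : ∀ r, 1 ≤ m r)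
    (hπ : Bijective fun q : Σ r, Fin (m r) => π q.1 q.2) (d : Fin n → ZMod p)
    {f : (Fin n → ZMod p) → ZMod p}
    (hf : ∀ x, f x =
      (∑ r, ∑ α ∈ range (m r - 1), x (π r α) * x (π r (α + 1))) + ∑ α, d α * x α)
    (h h' : Fin t → ZMod p) (u : ℤ) {z : Fin n → ZMod p} (hz : z ≠ 0)
    (hhead : ∀ r, z (π r 0) = 0) :
    aperSlice (addLinear f (fun r => π r (m r - 1)) h)
      (addLinear f (fun r => π r (m r - 1)) h') u z = 0 := by
  obtain ⟨r₀, α, hαm, hzα, hmin⟩ := exists_min_index_of_ne_zero m π hπ.2 hz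
  have hα : 1 ≤ α := Nat.one_le_iff_ne_zero.2 fun h0 => hzα (h0 ▸ hhead r₀)
  set k := π r₀ (α - 1)
  have hzk : z k = 0 := hmin r₀ (α - 1) (by omega) (by omega)
  have hw : ∀ r, (Pi.single k 1 : Fin n → ZMod p) (π r (m r - 1)) = 0 := by
    intro r
    refine Pi.single_eq_of_ne (fun hr => ?_) _
    obtain ⟨rfl, hidx⟩ := index_eq_of_vertex_eq m π hπ.1 (by have := hm r; omega) (by omega) hr
    omega
  rw [aperSlice, ← sum_filter]
  refine ZMod.sum_stdAddChar_eq_zero_of_add_right _ _ (Pi.single k 1) (neg_ne_zero.2 hzα)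
    (fun x => ?_) (fun x _ => ?_)
  · have e₁ := digitsEquiv_add_single (x + z) k (1 : ZMod p)
    have e₂ := digitsEquiv_add_single x k (1 : ZMod p)
    rw [Pi.add_apply, hzk, add_zero] at e₁
    simp only [mem_filter, mem_univ, true_and, add_right_comm x (Pi.single k 1) z]
    constructor <;> intro <;> linarith
  · have hpolar := second_diff_eq_pathPolar m π d hf x z (Pi.single k 1)
    rw [pathPolar_single m π hπ.1 hα hαm hmin] at hpolar
    simp only [addLinear, add_right_comm x (Pi.single k 1) z, Pi.add_apply, mul_add,
      sum_add_distrib, hw, add_zero]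
    linear_combination -hpolar

end PathEBF

/-- Vertex `α + 1` of the path `V_r` of the paper is `π r α` (0-indexed). -/
theorem statement0_general (p n t : ℕ) [Fact p.Prime]
    (m : Fin t → ℕ) (hm : ∀ r, 1 ≤ m r)
    (π : Fin t → ℕ → Fin n)
    (hπ : Function.Bijective fun q : Σ r : Fin t, Fin (m r) => π q.1 (q.2 : ℕ))
    (d : Fin n → ZMod p)
    (f : (Fin n → ZMod p) → ZMod p)
    (hf : ∀ x, f x =
      (∑ r : Fin t, ∑ α ∈ Finset.range (m r - 1), x (π r α) * x (π r (α + 1))) +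
        ∑ α : Fin n, d α * x α)
    (cseq : (Fin t → ZMod p) → (Fin t → ZMod p) → ℕ → ℂ)
    (hc : ∀ h s, cseq h s = psiSeq p n fun x =>
      f x + (∑ r : Fin t, s r * x (π r 0)) + ∑ r : Fin t, h r * x (π r (m r - 1)))
    (h h' : Fin t → ZMod p) (u : ℤ) :
    ∑ s : Fin t → ZMod p, aper (p ^ n) (cseq h s) (cseq h' s) u =
      if h = h' ∧ u = 0 then ((p : ℂ)) ^ (n + t) else 0 := by
  have hcseq : ∀ c s, cseq c s =
      psiSeq p n (addLinear (addLinear f (fun r => π r (m r - 1)) c) (fun r => π r 0) s) := by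
    intro c s
    rw [hc]
    congr 1
    funext x
    simp only [addLinear]
    ring
  simp_rw [hcseq]
  rw [sum_aper_psiSeq_addLinear, Fintype.sum_eq_single 0 fun z hz =>
      ite_eq_right_iff.2 fun hhead => aperSlice_eq_zero m π hm hπ d hf h h' u hz hhead,
    if_pos fun r => Pi.zero_apply (π r 0), aperSlice_zero,
    sum_stdAddChar_addLinear_sub _ (injective_last_vertex m π hm hπ.1), Fintype.card_fin]
  by_cases hu : u = 0 <;> by_cases hh : h = h' <;> simp [hu, hh, pow_add, mul_comm]

/-- Lemma 1: the family `{C_h : h ∈ (Z_p)^t}`, where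
`C_h = {ψ(f + ∑_r s_r x_{π_r(1)} + ∑_r h_r x_{π_r(m_r)}) : s ∈ (Z_p)^t}`, is a
`(p^t, p^t, p^n)`-CCC.  Here the partition `{V_1,…,V_t}` of `{1,…,n}` together with the
bijections `π_r : {1,…,m_r} → V_r` is encoded (0-indexed) by maps `π r : ℕ → Fin n`
such that `(r, α) ↦ π r α` is a bijection from `Σ r, Fin (m r)` onto `Fin n`. -/
theorem statement0 (p n t : ℕ) [Fact p.Prime] (hn : 1 ≤ n) (ht : 1 ≤ t) (htn : t ≤ n)
    (m : Fin t → ℕ) (hm : ∀ r, 1 ≤ m r)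
    (π : Fin t → ℕ → Fin n)
    (hπ : Function.Bijective fun q : Σ r : Fin t, Fin (m r) => π q.1 (q.2 : ℕ))
    (d : Fin n → ZMod p)
    (f : (Fin n → ZMod p) → ZMod p)
    (hf : ∀ x, f x =
      (∑ r : Fin t, ∑ α ∈ Finset.range (m r - 1), x (π r α) * x (π r (α + 1))) +
        ∑ α : Fin n, d α * x α)
    (cseq : (Fin t → ZMod p) → (Fin t → ZMod p) → ℕ → ℂ)
    (hc : ∀ h s, cseq h s = psiSeq p n fun x =>
      f x + (∑ r : Fin t, s r * x (π r 0)) + ∑ r : Fin t, h r * x (π r (m r - 1)))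
    (h h' : Fin t → ZMod p) (u : ℤ) (hu : |u| < (p : ℤ) ^ n) :
    ∑ s : Fin t → ZMod p, aper (p ^ n) (cseq h s) (cseq h' s) u =
      if h = h' ∧ u = 0 then ((p : ℂ)) ^ (n + t) else 0 :=
  statement0_general p n t m hm π hπ d f hf cseq hc h h' u
end

section
/- Let p be a prime, n ≥ 1, J = {j_1 < … < j_k} ⊆ {1,…,n} with 1 ≤ k < n, and 1 ≤ t ≤ n−k. Let {V_1,…,V_t} be a partition of {1,…,n}∖J into nonempty sets with m_r = |V_r|, and let π_r : {1,…,m_r} → V_r be bijections. Fix d_1,…,d_n ∈ Z_p, define f(x) = Σ_{r=1}^t Σ_{α=1}^{m_r−1} x_{π_r(α)} x_{π_r(α+1)} + Σ_{α=1}^n d_α x_α, and fix c = (c_1,…,c_k) ∈ (Z_p)^k. For h ∈ (Z_p)^t let C_h be the ordered family of p^t restricted sequences c_h^s = ψ((f + Σ_{r=1}^t s_r x_{π_r(1)} + Σ_{r=1}^t h_r x_{π_r(m_r)})|_{x_J = c}), indexed by s ∈ (Z_p)^t. Then: (i) for all h, h′ ∈ (Z_p)^t and all integers u with |u| < p^n,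 Σ_{s∈(Z_p)^t} γ(c_h^s, c_{h′}^s)(u) equals p^{n+t−k} if h = h′ and u = 0, and equals 0 otherwise (i.e., {C_h} is a (p^t,p^t,p^n)-SNC-CCC); (ii) the support (set of indices of nonzero entries) of every sequence c_h^s equals Ω = { Σ_{i=1}^k c_i p^{j_i−1} + Σ_{α∈{1,…,n}∖J} b_α p^{α−1} : b_α ∈ {0,1,…,p−1} }. -/
open Finset

/-- The restricted sequence `ψ(f|_{x_J = c})`: the `x`-th entry equals that of `ψ(f)`
when the digits of `x` at the positions `J` agree with `c`, and `0` otherwise. -/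
noncomputable def psiRes (p m k : ℕ) (f : (Fin m → ZMod p) → ZMod p)
    (J : Fin k → Fin m) (c : Fin k → ZMod p) : ℕ → ℂ :=
  fun x => if ∀ α : Fin k, digitZ p x ((J α : ℕ)) = c α then psiSeq p m f x else 0

namespace St1

noncomputable def chi (p : ℕ) (a : ZMod p) : ℂ :=
  Complex.exp (2 * Real.pi * Complex.I * (a.val : ℂ) / p)

lemma chi_natCast (p : ℕ) [NeZero p] (x : ℕ) :
    chi p (x : ZMod p) = Complex.exp (2 * Real.pi * Complex.I * (x : ℂ) / p) := by
  have hp : (p : ℂ) ≠ 0 := Nat.cast_ne_zero.mpr (NeZero.ne p)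
  have hval : ((x : ZMod p)).val = x % p := ZMod.val_natCast p x
  obtain ⟨q, r, hr, rfl⟩ : ∃ q r : ℕ, r = x % p ∧ x = p * q + r :=
    ⟨x / p, x % p, rfl, (Nat.div_add_mod x p).symm⟩
  rw [chi, hval]
  have hxr : (p * q + r) % p = r % p := Nat.mul_add_mod p q r
  rw [hxr]
  have hrp : r % p = r := by
    have : r < p := by
      rw [hr]; exact Nat.mod_lt _ (Nat.pos_of_ne_zero (NeZero.ne p))
    exact Nat.mod_eq_of_lt this
  rw [hrp]
  rw [show 2 * (Real.pi:ℂ) * Complex.I * ((p * q + r : ℕ) : ℂ) / p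
      = (q : ℤ) * (2 * (Real.pi:ℂ) * Complex.I) + 2 * (Real.pi:ℂ) * Complex.I * (r : ℂ) / p by
    push_cast; field_simp]
  rw [Complex.exp_add, Complex.exp_int_mul_two_pi_mul_I, one_mul]

lemma chi_add (p : ℕ) [NeZero p] (a b : ZMod p) : chi p (a + b) = chi p a * chi p b := by
  have hp : (p : ℂ) ≠ 0 := Nat.cast_ne_zero.mpr (NeZero.ne p)
  have ha : ((a.val : ℕ) : ZMod p) = a := by simp [ZMod.natCast_val, ZMod.cast_id]
  have hb : ((b.val : ℕ) : ZMod p) = b := by simp [ZMod.natCast_val, ZMod.cast_id]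
  have h : a + b = ((a.val + b.val : ℕ) : ZMod p) := by push_cast [ha, hb]; ring
  rw [h, chi_natCast]
  show _ = Complex.exp _ * Complex.exp _
  rw [← Complex.exp_add]
  congr 1
  push_cast
  field_simp

lemma chi_zero (p : ℕ) [NeZero p] : chi p 0 = 1 := by
  simp [chi, ZMod.val_zero]

lemma chi_ne_one (p : ℕ) [NeZero p] {a : ZMod p} (ha : a ≠ 0) : chi p a ≠ 1 := by
  intro h
  rw [chi, Complex.exp_eq_one_iff] at h
  obtain ⟨z, hz⟩ := h
  have hp : (p : ℂ) ≠ 0 := Nat.cast_ne_zero.mpr (NeZero.ne p)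
  have h2 : (2 * (Real.pi:ℂ) * Complex.I) ≠ 0 := by
    simp [Real.pi_ne_zero, Complex.I_ne_zero]
  rw [div_eq_iff hp] at hz
  have hc : (a.val : ℂ) = (z : ℂ) * p := by
    apply mul_left_cancel₀ h2
    linear_combination hz
  have hi : (a.val : ℤ) = z * p := by exact_mod_cast hc
  have hdvd' : p ∣ a.val := by
    have : (p:ℤ) ∣ (a.val : ℤ) := ⟨z, by linarith⟩
    exact_mod_cast this
  have hlt : a.val < p := ZMod.val_lt a
  have h0 : a.val = 0 := Nat.eq_zero_of_dvd_of_lt hdvd' hlt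
  exact ha ((ZMod.val_eq_zero a).mp h0)

lemma chi_conj (p : ℕ) [NeZero p] (a : ZMod p) :
    (starRingEnd ℂ) (chi p a) = chi p (-a) := by
  have h1 : chi p a * chi p (-a) = 1 := by
    rw [← chi_add, add_neg_cancel, chi_zero]
  have h2 : (starRingEnd ℂ) (chi p a) = (chi p a)⁻¹ := by
    rw [chi, ← Complex.exp_conj, ← Complex.exp_neg]
    congr 1
    simp only [map_div₀, map_mul, Complex.conj_I, Complex.conj_natCast,
      Complex.conj_ofReal, map_ofNat]
    ring
  rw [h2]
  exact inv_eq_of_mul_eq_one_right h1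



variable {p n : ℕ}

def zmodFinEquiv (p : ℕ) [NeZero p] : ZMod p ≃ Fin p where
  toFun a := ⟨a.val, ZMod.val_lt a⟩
  invFun b := ((b : ℕ) : ZMod p)
  left_inv a := by simp [ZMod.natCast_val, ZMod.cast_id]
  right_inv b := by
    ext
    exact ZMod.val_cast_of_lt b.isLt

def encEquiv (p n : ℕ) [NeZero p] : (Fin n → ZMod p) ≃ Fin (p ^ n) :=
  (Equiv.piCongrRight fun _ => zmodFinEquiv p).trans finFunctionFinEquiv

def encode (p : ℕ) {n : ℕ} (v : Fin n → ZMod p) : ℕ :=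
  ∑ α : Fin n, (v α).val * p ^ (α : ℕ)

lemma encEquiv_val [NeZero p] (v : Fin n → ZMod p) :
    ((encEquiv p n v : Fin (p ^ n)) : ℕ) = encode p v := by
  rw [encEquiv, Equiv.trans_apply, finFunctionFinEquiv_apply]
  rfl

lemma encode_lt [NeZero p] (v : Fin n → ZMod p) : encode p v < p ^ n := by
  rw [← encEquiv_val]; exact (encEquiv p n v).isLt

lemma digit_encode [NeZero p] (v : Fin n → ZMod p) (γ : Fin n) :
    digitZ p (encode p v) (γ : ℕ) = v γ := by
  have h2 : finFunctionFinEquiv.symm (finFunctionFinEquiv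
      ((Equiv.piCongrRight fun _ : Fin n => zmodFinEquiv p) v)) =
      (Equiv.piCongrRight fun _ : Fin n => zmodFinEquiv p) v :=
    Equiv.symm_apply_apply _ _
  have h3 := finFunctionFinEquiv_symm_apply_val
    (finFunctionFinEquiv ((Equiv.piCongrRight fun _ : Fin n => zmodFinEquiv p) v)) γ
  rw [h2] at h3
  have h4 : ((Equiv.piCongrRight fun _ : Fin n => zmodFinEquiv p) v γ : ℕ) = (v γ).val := rfl
  have h5 : ((finFunctionFinEquiv ((Equiv.piCongrRight fun _ : Fin n => zmodFinEquiv p) v) :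
      Fin (p^n)) : ℕ) = encode p v := encEquiv_val v
  rw [h4, h5] at h3
  rw [digitZ, ← h3]
  simp [ZMod.natCast_val, ZMod.cast_id]

lemma encode_inj [NeZero p] : Function.Injective (encode p : (Fin n → ZMod p) → ℕ) := by
  intro v w h
  funext γ
  rw [← digit_encode v γ, ← digit_encode w γ, h]

lemma sum_range_pow_eq [NeZero p] (F : ℕ → ℂ) :
    ∑ i ∈ range (p ^ n), F i = ∑ v : Fin n → ZMod p, F (encode p v) := by
  rw [← Fin.sum_univ_eq_sum_range,
    ← Equiv.sum_comp (encEquiv p n) (fun a : Fin (p ^ n) => F (a : ℕ))]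
  exact sum_congr rfl fun v _ => by rw [encEquiv_val]

lemma eq_sum_digits [NeZero p] {x : ℕ} (hx : x < p ^ n) :
    x = ∑ α : Fin n, x / p ^ (α : ℕ) % p * p ^ (α : ℕ) := by
  have h1 : (finFunctionFinEquiv (finFunctionFinEquiv.symm (⟨x, hx⟩ : Fin (p ^ n))) : ℕ) = x := by
    rw [Equiv.apply_symm_apply]
  rw [finFunctionFinEquiv_apply] at h1
  conv_lhs => rw [← h1]
  exact sum_congr rfl fun γ _ => by
    rw [finFunctionFinEquiv_symm_apply_val]

lemma sum_shift_zero {ι : Type*} (s : Finset ι) (g : ι → ℂ) (T T' : ι → ι)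
    (hT : ∀ x ∈ s, T x ∈ s) (hT' : ∀ x ∈ s, T' x ∈ s)
    (hTT' : ∀ x ∈ s, T' (T x) = x) (hT'T : ∀ x ∈ s, T (T' x) = x)
    (c : ℂ) (hc : c ≠ 1) (hg : ∀ x ∈ s, g (T x) = c * g x) : ∑ x ∈ s, g x = 0 := by
  have h1 : ∑ x ∈ s, g x = ∑ x ∈ s, g (T x) :=
    Finset.sum_nbij' T' T hT' hT hT'T hTT' (fun a ha => by rw [hT'T a ha])
  have h2 : ∑ x ∈ s, g (T x) = c * ∑ x ∈ s, g x := by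
    rw [mul_sum]; exact sum_congr rfl hg
  have h2' : ∑ x ∈ s, g x = c * ∑ x ∈ s, g x := h1.trans h2
  have h3 : (1 - c) * ∑ x ∈ s, g x = 0 := by linear_combination h2'
  rcases mul_eq_zero.mp h3 with h | h
  · exact absurd (by linear_combination -h : c = 1) hc
  · exact h

lemma sum_chi_mul (p : ℕ) [NeZero p] {δ : ZMod p} (hδ : δ ≠ 0) :
    ∑ z : ZMod p, chi p (z * δ) = 0 := by
  apply sum_shift_zero univ _ (fun z => z + 1) (fun z => z - 1)
    (fun _ _ => mem_univ _) (fun _ _ => mem_univ _)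
    (fun x _ => by ring) (fun x _ => by ring) (chi p δ) (chi_ne_one p hδ)
  intro z _
  rw [show (z + 1) * δ = δ + z * δ by ring, chi_add]

lemma sum_chi_fun (p : ℕ) [NeZero p] {t : ℕ} (e : Fin t → ZMod p) :
    ∑ s : Fin t → ZMod p, chi p (∑ r, s r * e r) =
      if ∀ r, e r = 0 then ((p : ℂ)) ^ t else 0 := by
  by_cases he : ∀ r, e r = 0
  · rw [if_pos he]
    have h1 : ∀ s : Fin t → ZMod p, chi p (∑ r, s r * e r) = 1 := by
      intro s
      have : ∑ r, s r * e r = 0 := by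
        rw [Finset.sum_eq_zero]
        intro r _
        rw [he r, mul_zero]
      rw [this, chi_zero]
    rw [sum_congr rfl fun s _ => h1 s, sum_const, card_univ, Fintype.card_fun,
      ZMod.card, Fintype.card_fin, nsmul_eq_mul, mul_one]
    push_cast
    ring
  · rw [if_neg he]
    push_neg at he
    obtain ⟨r0, hr0⟩ := he
    apply sum_shift_zero univ _ (fun s => s + (Pi.single r0 1 : Fin t → ZMod p)) (fun s => s - (Pi.single r0 1 : Fin t → ZMod p))
      (fun _ _ => mem_univ _) (fun _ _ => mem_univ _)
      (fun x _ => by ring) (fun x _ => by ring) (chi p (e r0)) (chi_ne_one p hr0)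
    intro s _
    have h2 : ∑ r, (s + (Pi.single r0 1 : Fin t → ZMod p)) r * e r = e r0 + ∑ r, s r * e r := by
      have : ∀ r, (s + (Pi.single r0 1 : Fin t → ZMod p)) r * e r
          = s r * e r + (if r = r0 then e r else 0) := by
        intro r
        rcases eq_or_ne r r0 with rfl | hne
        · simp [Pi.single_apply, add_mul]
        · simp [Pi.single_apply, hne]
      rw [sum_congr rfl fun r _ => this r, Finset.sum_add_distrib, Finset.sum_ite_eq' univ r0]
      simp [add_comm]
    rw [h2, chi_add]

lemma min_untop'_mem {α : Type*} [LinearOrder α] {s : Finset α} (hs : s.Nonempty) (d : α) :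
    WithTop.untopD d s.min ∈ s := by
  rw [← Finset.coe_min' hs, WithTop.untopD_coe]
  exact Finset.min'_mem s hs

lemma min_untop'_le {α : Type*} [LinearOrder α] {s : Finset α} (hs : s.Nonempty) (d : α)
    {x : α} (hx : x ∈ s) : WithTop.untopD d s.min ≤ x := by
  rw [← Finset.coe_min' hs, WithTop.untopD_coe]
  exact Finset.min'_le s x hx

section Main

variable {p n k t : ℕ}

def F0 (m : Fin t → ℕ) (π : Fin t → ℕ → Fin n) (d : Fin n → ZMod p)
    (x : Fin n → ZMod p) : ZMod p :=
  (∑ r : Fin t, ∑ α ∈ Finset.range (m r - 1), x (π r α) * x (π r (α + 1))) +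
    ∑ α : Fin n, d α * x α

def gf (m : Fin t → ℕ) (π : Fin t → ℕ → Fin n) (d : Fin n → ZMod p)
    (h h' : Fin t → ZMod p) (P : (Fin n → ZMod p) × (Fin n → ZMod p)) : ZMod p :=
  F0 m π d P.1 - F0 m π d P.2 + ∑ r : Fin t, h r * P.1 (π r (m r - 1)) -
    ∑ r : Fin t, h' r * P.2 (π r (m r - 1))

def Apairs [NeZero p] (J : Fin k → Fin n) (m : Fin t → ℕ) (π : Fin t → ℕ → Fin n)
    (c : Fin k → ZMod p) (u : ℤ) : Finset ((Fin n → ZMod p) × (Fin n → ZMod p)) :=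
  univ.filter fun P => ((encode p P.2 : ℤ) - (encode p P.1 : ℤ) = u) ∧
    (∀ α, P.1 (J α) = c α) ∧ (∀ α, P.2 (J α) = c α) ∧ (∀ r, P.1 (π r 0) = P.2 (π r 0))

variable {J : Fin k → Fin n} {m : Fin t → ℕ} {π : Fin t → ℕ → Fin n}

lemma slot_eq (hπinj : Function.Injective fun q : Σ r : Fin t, Fin (m r) => π q.1 (q.2 : ℕ))
    {r r' : Fin t} {α α' : ℕ} (h1 : α < m r) (h2 : α' < m r') :
    π r α = π r' α' ↔ r = r' ∧ α = α' := by
  constructor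
  · intro h
    have key : (⟨r, ⟨α, h1⟩⟩ : Σ r : Fin t, Fin (m r)) = ⟨r', ⟨α', h2⟩⟩ := hπinj h
    obtain ⟨h3, h4⟩ := Sigma.mk.inj_iff.mp key
    subst h3
    exact ⟨rfl, congrArg Fin.val (heq_iff_eq.mp h4)⟩
  · rintro ⟨rfl, rfl⟩; rfl

lemma slot_not_in_J
    (hπran : Set.range (fun q : Σ r : Fin t, Fin (m r) => π q.1 (q.2 : ℕ)) =
      {i : Fin n | i ∉ Set.range J}) {r : Fin t} {α : ℕ} (h : α < m r) :
    π r α ∉ Set.range J := by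
  have : π r α ∈ Set.range (fun q : Σ r : Fin t, Fin (m r) => π q.1 (q.2 : ℕ)) :=
    ⟨⟨r, ⟨α, h⟩⟩, rfl⟩
  rw [hπran] at this
  exact this

lemma exists_slot
    (hπran : Set.range (fun q : Σ r : Fin t, Fin (m r) => π q.1 (q.2 : ℕ)) =
      {i : Fin n | i ∉ Set.range J}) {i : Fin n} (hi : i ∉ Set.range J) :
    ∃ r : Fin t, ∃ β : ℕ, β < m r ∧ π r β = i := by
  have : i ∈ Set.range (fun q : Σ r : Fin t, Fin (m r) => π q.1 (q.2 : ℕ)) := by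
    rw [hπran]; exact hi
  obtain ⟨⟨r, β⟩, hq⟩ := this
  exact ⟨r, β.1, β.2, hq⟩

def Rset (m : Fin t → ℕ) (π : Fin t → ℕ → Fin n) (v w : Fin n → ZMod p) : Finset (Fin t) :=
  univ.filter fun r => ∃ β ∈ range (m r), v (π r β) ≠ w (π r β)

def rIdx [NeZero t] (m : Fin t → ℕ) (π : Fin t → ℕ → Fin n) (v w : Fin n → ZMod p) : Fin t :=
  WithTop.untopD 0 (Rset m π v w).min

def bset (m : Fin t → ℕ) (π : Fin t → ℕ → Fin n) (v w : Fin n → ZMod p) (r : Fin t) :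
    Finset ℕ :=
  (range (m r)).filter fun β => v (π r β) ≠ w (π r β)

def bIdx [NeZero t] (m : Fin t → ℕ) (π : Fin t → ℕ → Fin n) (v w : Fin n → ZMod p) : ℕ :=
  WithTop.untopD 0 (bset m π v w (rIdx m π v w)).min

variable [NeZero t] {v w : Fin n → ZMod p}

lemma rIdx_mem (hR : (Rset m π v w).Nonempty) : rIdx m π v w ∈ Rset m π v w :=
  min_untop'_mem hR 0

lemma bset_nonempty (hR : (Rset m π v w).Nonempty) :
    (bset m π v w (rIdx m π v w)).Nonempty := by
  have h := rIdx_mem hR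
  rw [Rset, mem_filter] at h
  obtain ⟨-, β, hβ, hne⟩ := h
  exact ⟨β, mem_filter.mpr ⟨hβ, hne⟩⟩

lemma bIdx_mem (hR : (Rset m π v w).Nonempty) :
    bIdx m π v w ∈ bset m π v w (rIdx m π v w) :=
  min_untop'_mem (bset_nonempty hR) 0

lemma bIdx_lt (hR : (Rset m π v w).Nonempty) : bIdx m π v w < m (rIdx m π v w) :=
  mem_range.mp (mem_filter.mp (bIdx_mem hR)).1

lemma bIdx_ne (hR : (Rset m π v w).Nonempty) :
    v (π (rIdx m π v w) (bIdx m π v w)) ≠ w (π (rIdx m π v w) (bIdx m π v w)) :=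
  (mem_filter.mp (bIdx_mem hR)).2

lemma bIdx_min (hR : (Rset m π v w).Nonempty) {β : ℕ}
    (hβ : β ∈ bset m π v w (rIdx m π v w)) : bIdx m π v w ≤ β :=
  min_untop'_le (bset_nonempty hR) 0 hβ

lemma eq_of_lt_bIdx (hR : (Rset m π v w).Nonempty) {β : ℕ} (hβ : β < bIdx m π v w) :
    v (π (rIdx m π v w) β) = w (π (rIdx m π v w) β) := by
  by_contra hne
  have hrange : β < m (rIdx m π v w) := lt_trans hβ (bIdx_lt hR)
  have : β ∈ bset m π v w (rIdx m π v w) := by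
    rw [bset, mem_filter, mem_range]; exact ⟨hrange, hne⟩
  exact absurd (bIdx_min hR this) (not_le.mpr hβ)

lemma Rset_congr {v' w' : Fin n → ZMod p} (h : ∀ i, v i = w i ↔ v' i = w' i) :
    Rset m π v w = Rset m π v' w' := by
  apply filter_congr
  intro r _
  exact exists_congr fun β => and_congr_right fun _ => not_iff_not.mpr (h _)

lemma rIdx_congr {v' w' : Fin n → ZMod p} (h : ∀ i, v i = w i ↔ v' i = w' i) :
    rIdx m π v w = rIdx m π v' w' := by
  rw [rIdx, rIdx, Rset_congr h]

lemma bIdx_congr {v' w' : Fin n → ZMod p} (h : ∀ i, v i = w i ↔ v' i = w' i) :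
    bIdx m π v w = bIdx m π v' w' := by
  rw [bIdx, bIdx, rIdx_congr h]
  congr 2
  apply filter_congr
  intro β _
  exact not_iff_not.mpr (h _)

section UpdateLemmas

variable [NeZero p] {d : Fin n → ZMod p}

lemma encode_update (v : Fin n → ZMod p) (q : Fin n) (y : ZMod p) :
    (encode p (Function.update v q y) : ℤ) =
      (encode p v : ℤ) + ((y.val : ℤ) - ((v q).val : ℤ)) * (p : ℤ) ^ (q : ℕ) := by
  have expand : ∀ u : Fin n → ZMod p, (encode p u : ℤ)
      = ∑ α ∈ univ \ {q}, ((u α).val : ℤ) * (p:ℤ)^(α:ℕ) + ((u q).val : ℤ) * (p:ℤ)^(q:ℕ) := by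
    intro u
    rw [encode]
    push_cast
    rw [Finset.sum_eq_sum_sdiff_singleton_add (mem_univ q)]
  rw [expand, expand v]
  have hsame : ∑ α ∈ univ \ {q}, (((Function.update v q y) α).val : ℤ) * (p:ℤ)^(α:ℕ)
      = ∑ α ∈ univ \ {q}, ((v α).val : ℤ) * (p:ℤ)^(α:ℕ) := by
    apply sum_congr rfl
    intro α hα
    rw [Function.update_of_ne (notMem_singleton.mp (mem_sdiff.mp hα).2)]
  rw [hsame, Function.update_self]
  ring

lemma F0_update (hπinj : Function.Injective fun q : Σ r : Fin t, Fin (m r) => π q.1 (q.2 : ℕ))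
    (x : Fin n → ZMod p) (r0 : Fin t) (β : ℕ)
    (hβ1 : 1 ≤ β) (hβm : β < m r0) (z : ZMod p) :
    F0 m π d (Function.update x (π r0 (β - 1)) (x (π r0 (β - 1)) + z)) =
      F0 m π d x + z * x (π r0 β) + (if 2 ≤ β then z * x (π r0 (β - 2)) else 0)
        + z * d (π r0 (β - 1)) := by
  have hβ1m : β - 1 < m r0 := by omega
  set q : Fin n := π r0 (β - 1) with hq
  set x' : Fin n → ZMod p := Function.update x q (x q + z) with hx'
  have hquad : ∀ r' : Fin t, ∀ α ∈ range (m r' - 1),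
      x' (π r' α) * x' (π r' (α + 1)) =
        x (π r' α) * x (π r' (α + 1))
        + (if r' = r0 ∧ α = β - 1 then z * x (π r' (α + 1)) else 0)
        + (if r' = r0 ∧ α + 1 = β - 1 then z * x (π r' α) else 0) := by
    intro r' α hα
    rw [mem_range] at hα
    have hα1 : α < m r' := by omega
    have hα2 : α + 1 < m r' := by omega
    have e1 : π r' α = q ↔ (r' = r0 ∧ α = β - 1) := slot_eq hπinj hα1 hβ1m
    have e2 : π r' (α + 1) = q ↔ (r' = r0 ∧ α + 1 = β - 1) := slot_eq hπinj hα2 hβ1m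
    by_cases h1 : r' = r0 ∧ α = β - 1
    · have hne2 : ¬(r' = r0 ∧ α + 1 = β - 1) := by
        rintro ⟨-, hh⟩
        omega
      rw [if_pos h1, if_neg hne2, add_zero]
      have hx2 : x' (π r' (α + 1)) = x (π r' (α + 1)) :=
        Function.update_of_ne (fun hh => hne2 (e2.mp hh)) _ _
      rw [hx2, e1.mpr h1, hx', Function.update_self]
      ring
    · by_cases h2 : r' = r0 ∧ α + 1 = β - 1
      · rw [if_neg h1, if_pos h2, add_zero]
        have hx1 : x' (π r' α) = x (π r' α) :=
          Function.update_of_ne (fun hh => h1 (e1.mp hh)) _ _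
        rw [hx1, e2.mpr h2, hx', Function.update_self]
        ring
      · rw [if_neg h1, if_neg h2, add_zero, add_zero]
        rw [show x' (π r' α) = x (π r' α) from
            Function.update_of_ne (fun hh => h1 (e1.mp hh)) _ _,
          show x' (π r' (α + 1)) = x (π r' (α + 1)) from
            Function.update_of_ne (fun hh => h2 (e2.mp hh)) _ _]
  have hB : ∑ r' : Fin t, ∑ α ∈ range (m r' - 1),
      (if r' = r0 ∧ α = β - 1 then z * x (π r' (α + 1)) else 0) = z * x (π r0 β) := by
    have hrow : ∀ r' : Fin t, ∑ α ∈ range (m r' - 1),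
        (if r' = r0 ∧ α = β - 1 then z * x (π r' (α + 1)) else 0)
          = if r' = r0 then z * x (π r0 β) else 0 := by
      intro r'
      by_cases hr : r' = r0
      · rw [if_pos hr]
        have key : ∀ α ∈ range (m r' - 1),
            (if r' = r0 ∧ α = β - 1 then z * x (π r' (α + 1)) else 0)
              = if α = β - 1 then z * x (π r0 (α + 1)) else 0 := by
          intro α _
          by_cases hh : α = β - 1
          · rw [if_pos ⟨hr, hh⟩, if_pos hh, hr]
          · rw [if_neg (fun hc => hh hc.2), if_neg hh]
        rw [sum_congr rfl key, Finset.sum_ite_eq' (range (m r' - 1)) (β - 1)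
          (fun α => z * x (π r0 (α + 1))), if_pos]
        · rw [show β - 1 + 1 = β from by omega]
        · rw [mem_range, hr]
          omega
      · rw [if_neg hr]
        apply Finset.sum_eq_zero
        intro α _
        rw [if_neg (fun hc => hr hc.1)]
    rw [sum_congr rfl fun r' _ => hrow r', Finset.sum_ite_eq' univ r0
      (fun _ => z * x (π r0 β)), if_pos (mem_univ _)]
  have hC : ∑ r' : Fin t, ∑ α ∈ range (m r' - 1),
      (if r' = r0 ∧ α + 1 = β - 1 then z * x (π r' α) else 0)
        = if 2 ≤ β then z * x (π r0 (β - 2)) else 0 := by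
    have hrow : ∀ r' : Fin t, ∑ α ∈ range (m r' - 1),
        (if r' = r0 ∧ α + 1 = β - 1 then z * x (π r' α) else 0)
          = if r' = r0 then (if 2 ≤ β then z * x (π r0 (β - 2)) else 0) else 0 := by
      intro r'
      by_cases hr : r' = r0
      · rw [if_pos hr]
        by_cases h2b : 2 ≤ β
        · rw [if_pos h2b]
          have key : ∀ α ∈ range (m r' - 1),
              (if r' = r0 ∧ α + 1 = β - 1 then z * x (π r' α) else 0)
                = if α = β - 2 then z * x (π r0 α) else 0 := by
            intro α _
            by_cases hh : α = β - 2
            · rw [if_pos ⟨hr, by omega⟩, if_pos hh, hr]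
            · rw [if_neg (fun hc => hh (by omega : α = β - 2)), if_neg hh]
          rw [sum_congr rfl key, Finset.sum_ite_eq' (range (m r' - 1)) (β - 2)
            (fun α => z * x (π r0 α)), if_pos]
          rw [mem_range, hr]
          omega
        · rw [if_neg h2b]
          apply Finset.sum_eq_zero
          intro α _
          rw [if_neg]
          rintro ⟨-, hc⟩
          omega
      · rw [if_neg hr]
        apply Finset.sum_eq_zero
        intro α _
        rw [if_neg (fun hc => hr hc.1)]
    rw [sum_congr rfl fun r' _ => hrow r', Finset.sum_ite_eq' univ r0
      (fun _ => if 2 ≤ β then z * x (π r0 (β - 2)) else 0), if_pos (mem_univ _)]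
  have hlin : ∑ α : Fin n, d α * x' α = (∑ α : Fin n, d α * x α) + z * d q := by
    have point : ∀ α : Fin n, d α * x' α = d α * x α + (if α = q then d α * z else 0) := by
      intro α
      by_cases hα : α = q
      · subst hα
        rw [if_pos rfl, show x' q = x q + z from by rw [hx', Function.update_self]]
        ring
      · rw [if_neg hα, hx', Function.update_of_ne hα, add_zero]
    rw [sum_congr rfl fun α _ => point α, Finset.sum_add_distrib,
      Finset.sum_ite_eq' univ q (fun α => d α * z), if_pos (mem_univ _)]
    ring
  rw [F0, F0]
  rw [sum_congr rfl fun r' _ => sum_congr rfl fun α hα => hquad r' α hα]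
  simp only [Finset.sum_add_distrib]
  rw [hB, hC, hlin]
  ring

end UpdateLemmas

section ShiftSec

variable [NeZero p] [NeZero t] {J : Fin k → Fin n} {d : Fin n → ZMod p} {c : Fin k → ZMod p}
  {u : ℤ} {P : (Fin n → ZMod p) × (Fin n → ZMod p)}

lemma mem_Apairs {u : ℤ} {P : (Fin n → ZMod p) × (Fin n → ZMod p)} :
    P ∈ Apairs J m π c u ↔ ((encode p P.2 : ℤ) - (encode p P.1 : ℤ) = u) ∧
      (∀ α, P.1 (J α) = c α) ∧ (∀ α, P.2 (J α) = c α) ∧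
      (∀ r, P.1 (π r 0) = P.2 (π r 0)) := by
  rw [Apairs, mem_filter]
  simp only [mem_univ, true_and]

lemma apairs_Rset_nonempty
    (hπran : Set.range (fun q : Σ r : Fin t, Fin (m r) => π q.1 (q.2 : ℕ)) =
      {i : Fin n | i ∉ Set.range J})
    (hP : P ∈ Apairs J m π c u) (hu : u ≠ 0) : (Rset m π P.1 P.2).Nonempty := by
  obtain ⟨henc, h1, h2, h3⟩ := mem_Apairs.mp hP
  have hne : P.1 ≠ P.2 := by
    intro hcontra
    rw [hcontra, sub_self] at henc
    exact hu henc.symm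
  obtain ⟨i, hi⟩ : ∃ i, P.1 i ≠ P.2 i := by
    by_contra hc
    push_neg at hc
    exact hne (funext hc)
  have hiJ : i ∉ Set.range J := by
    rintro ⟨α, rfl⟩
    exact hi ((h1 α).trans (h2 α).symm)
  obtain ⟨r, β, hβ, hπβ⟩ := exists_slot hπran hiJ
  exact ⟨r, mem_filter.mpr ⟨mem_univ _, β, mem_range.mpr hβ, by rw [hπβ]; exact hi⟩⟩

lemma apairs_bIdx_pos
    (hπran : Set.range (fun q : Σ r : Fin t, Fin (m r) => π q.1 (q.2 : ℕ)) =
      {i : Fin n | i ∉ Set.range J})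
    (hP : P ∈ Apairs J m π c u) (hu : u ≠ 0) : 1 ≤ bIdx m π P.1 P.2 := by
  have hR := apairs_Rset_nonempty hπran hP hu
  by_contra hb
  have hb0 : bIdx m π P.1 P.2 = 0 := by omega
  have := bIdx_ne hR
  rw [hb0] at this
  exact this ((mem_Apairs.mp hP).2.2.2 _)

def Tsh (m : Fin t → ℕ) (π : Fin t → ℕ → Fin n) (z : ZMod p)
    (P : (Fin n → ZMod p) × (Fin n → ZMod p)) : (Fin n → ZMod p) × (Fin n → ZMod p) :=
  (Function.update P.1 (π (rIdx m π P.1 P.2) (bIdx m π P.1 P.2 - 1))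
      (P.1 (π (rIdx m π P.1 P.2) (bIdx m π P.1 P.2 - 1)) + z),
   Function.update P.2 (π (rIdx m π P.1 P.2) (bIdx m π P.1 P.2 - 1))
      (P.2 (π (rIdx m π P.1 P.2) (bIdx m π P.1 P.2 - 1)) + z))

lemma Tsh_pattern (z : ZMod p) :
    ∀ i, P.1 i = P.2 i ↔ (Tsh m π z P).1 i = (Tsh m π z P).2 i := by
  intro i
  by_cases hi : i = π (rIdx m π P.1 P.2) (bIdx m π P.1 P.2 - 1)
  · subst hi
    rw [Tsh]
    simp only [Function.update_self]
    constructor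
    · intro hh; rw [hh]
    · intro hh; exact add_right_cancel hh
  · rw [Tsh]
    simp only [Function.update_of_ne hi]

lemma Tsh_rIdx (z : ZMod p) :
    rIdx m π (Tsh m π z P).1 (Tsh m π z P).2 = rIdx m π P.1 P.2 :=
  (rIdx_congr (Tsh_pattern z)).symm

lemma Tsh_bIdx (z : ZMod p) :
    bIdx m π (Tsh m π z P).1 (Tsh m π z P).2 = bIdx m π P.1 P.2 :=
  (bIdx_congr (Tsh_pattern z)).symm

lemma Tsh_Tsh (z : ZMod p) : Tsh m π (-z) (Tsh m π z P) = P := by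
  have hr := Tsh_rIdx (m := m) (π := π) (P := P) z
  have hb := Tsh_bIdx (m := m) (π := π) (P := P) z
  have hdouble : ∀ (f : Fin n → ZMod p) (q : Fin n),
      Function.update (Function.update f q (f q + z)) q
        (Function.update f q (f q + z) q + (-z)) = f := by
    intro f q
    rw [Function.update_self, Function.update_idem, add_neg_cancel_right,
      Function.update_eq_self]
  show (Function.update (Tsh m π z P).1
      (π (rIdx m π (Tsh m π z P).1 (Tsh m π z P).2)
        (bIdx m π (Tsh m π z P).1 (Tsh m π z P).2 - 1))
      ((Tsh m π z P).1 (π (rIdx m π (Tsh m π z P).1 (Tsh m π z P).2)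
        (bIdx m π (Tsh m π z P).1 (Tsh m π z P).2 - 1)) + (-z)),
    Function.update (Tsh m π z P).2
      (π (rIdx m π (Tsh m π z P).1 (Tsh m π z P).2)
        (bIdx m π (Tsh m π z P).1 (Tsh m π z P).2 - 1))
      ((Tsh m π z P).2 (π (rIdx m π (Tsh m π z P).1 (Tsh m π z P).2)
        (bIdx m π (Tsh m π z P).1 (Tsh m π z P).2 - 1)) + (-z))) = P
  rw [hr, hb]
  rw [show (Tsh m π z P).1 = Function.update P.1
      (π (rIdx m π P.1 P.2) (bIdx m π P.1 P.2 - 1))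
      (P.1 (π (rIdx m π P.1 P.2) (bIdx m π P.1 P.2 - 1)) + z) from rfl,
    show (Tsh m π z P).2 = Function.update P.2
      (π (rIdx m π P.1 P.2) (bIdx m π P.1 P.2 - 1))
      (P.2 (π (rIdx m π P.1 P.2) (bIdx m π P.1 P.2 - 1)) + z) from rfl,
    hdouble, hdouble]

lemma Tsh_mem
    (hπinj : Function.Injective fun q : Σ r : Fin t, Fin (m r) => π q.1 (q.2 : ℕ))
    (hπran : Set.range (fun q : Σ r : Fin t, Fin (m r) => π q.1 (q.2 : ℕ)) =
      {i : Fin n | i ∉ Set.range J})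
    (hP : P ∈ Apairs J m π c u) (hu : u ≠ 0) (z : ZMod p) :
    Tsh m π z P ∈ Apairs J m π c u := by
  have hR := apairs_Rset_nonempty hπran hP hu
  have hb1 := apairs_bIdx_pos hπran hP hu
  have hblt := bIdx_lt hR
  obtain ⟨henc, h1, h2, h3⟩ := mem_Apairs.mp hP
  set r0 := rIdx m π P.1 P.2 with hr0def
  set β := bIdx m π P.1 P.2 with hbdef
  have hqval : β - 1 < m r0 := by omega
  have hqeq : P.1 (π r0 (β - 1)) = P.2 (π r0 (β - 1)) := eq_of_lt_bIdx hR (by omega)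
  have hqJ : π r0 (β - 1) ∉ Set.range J := slot_not_in_J hπran hqval
  rw [mem_Apairs]
  refine ⟨?_, ?_, ?_, ?_⟩
  · show (encode p (Function.update P.2 (π r0 (β - 1)) (P.2 (π r0 (β - 1)) + z)) : ℤ) -
      (encode p (Function.update P.1 (π r0 (β - 1)) (P.1 (π r0 (β - 1)) + z)) : ℤ) = u
    rw [encode_update, encode_update, hqeq]
    linarith [henc]
  · intro α
    show Function.update P.1 (π r0 (β - 1)) (P.1 (π r0 (β - 1)) + z) (J α) = c α
    rw [Function.update_of_ne (fun hh => hqJ ⟨α, hh⟩)]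
    exact h1 α
  · intro α
    show Function.update P.2 (π r0 (β - 1)) (P.2 (π r0 (β - 1)) + z) (J α) = c α
    rw [Function.update_of_ne (fun hh => hqJ ⟨α, hh⟩)]
    exact h2 α
  · intro r
    show Function.update P.1 (π r0 (β - 1)) (P.1 (π r0 (β - 1)) + z) (π r 0) =
      Function.update P.2 (π r0 (β - 1)) (P.2 (π r0 (β - 1)) + z) (π r 0)
    by_cases he : π r 0 = π r0 (β - 1)
    · rw [he, Function.update_self, Function.update_self, hqeq]
    · rw [Function.update_of_ne he, Function.update_of_ne he]
      exact h3 r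

lemma Tsh_gf
    (hπinj : Function.Injective fun q : Σ r : Fin t, Fin (m r) => π q.1 (q.2 : ℕ))
    (hπran : Set.range (fun q : Σ r : Fin t, Fin (m r) => π q.1 (q.2 : ℕ)) =
      {i : Fin n | i ∉ Set.range J})
    (hm : ∀ r, 1 ≤ m r) (h h' : Fin t → ZMod p)
    (hP : P ∈ Apairs J m π c u) (hu : u ≠ 0) (z : ZMod p) :
    gf m π d h h' (Tsh m π z P) = gf m π d h h' P +
      z * (P.1 (π (rIdx m π P.1 P.2) (bIdx m π P.1 P.2)) -
        P.2 (π (rIdx m π P.1 P.2) (bIdx m π P.1 P.2))) := by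
  have hR := apairs_Rset_nonempty hπran hP hu
  have hb1 := apairs_bIdx_pos hπran hP hu
  have hblt := bIdx_lt hR
  set r0 := rIdx m π P.1 P.2 with hr0def
  set β := bIdx m π P.1 P.2 with hbdef
  have hqval : β - 1 < m r0 := by omega
  have hqne : ∀ r : Fin t, π r (m r - 1) ≠ π r0 (β - 1) := by
    intro r hh
    have hcomp := (slot_eq hπinj (show m r - 1 < m r by have := hm r; omega) hqval).mp hh
    have hc2 := hcomp.2
    rw [hcomp.1] at hc2
    omega
  have hF1 : F0 m π d (Tsh m π z P).1 = F0 m π d P.1 + z * P.1 (π r0 β)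
      + (if 2 ≤ β then z * P.1 (π r0 (β - 2)) else 0) + z * d (π r0 (β - 1)) :=
    F0_update hπinj P.1 r0 β hb1 hblt z
  have hF2 : F0 m π d (Tsh m π z P).2 = F0 m π d P.2 + z * P.2 (π r0 β)
      + (if 2 ≤ β then z * P.2 (π r0 (β - 2)) else 0) + z * d (π r0 (β - 1)) :=
    F0_update hπinj P.2 r0 β hb1 hblt z
  have hif : (if 2 ≤ β then z * P.1 (π r0 (β - 2)) else 0)
      = (if 2 ≤ β then z * P.2 (π r0 (β - 2)) else 0) := by
    split_ifs with h2b
    · rw [eq_of_lt_bIdx hR (show β - 2 < β by omega)]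
    · rfl
  have hlin1 : ∑ r : Fin t, h r * (Tsh m π z P).1 (π r (m r - 1))
      = ∑ r : Fin t, h r * P.1 (π r (m r - 1)) := by
    apply sum_congr rfl
    intro r _
    show h r * Function.update P.1 (π r0 (β - 1)) (P.1 (π r0 (β - 1)) + z) (π r (m r - 1)) = _
    rw [Function.update_of_ne (hqne r)]
  have hlin2 : ∑ r : Fin t, h' r * (Tsh m π z P).2 (π r (m r - 1))
      = ∑ r : Fin t, h' r * P.2 (π r (m r - 1)) := by
    apply sum_congr rfl
    intro r _
    show h' r * Function.update P.2 (π r0 (β - 1)) (P.2 (π r0 (β - 1)) + z) (π r (m r - 1)) = _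
    rw [Function.update_of_ne (hqne r)]
  rw [gf, gf, hF1, hF2, hlin1, hlin2, hif]
  ring

lemma sum_Apairs_zero
    (hπinj : Function.Injective fun q : Σ r : Fin t, Fin (m r) => π q.1 (q.2 : ℕ))
    (hπran : Set.range (fun q : Σ r : Fin t, Fin (m r) => π q.1 (q.2 : ℕ)) =
      {i : Fin n | i ∉ Set.range J})
    (hm : ∀ r, 1 ≤ m r) (h h' : Fin t → ZMod p) {u : ℤ} (hu : u ≠ 0) :
    ∑ P ∈ Apairs J m π c u, chi p (gf m π d h h' P) = 0 := by
  have hp0 : (p : ℂ) ≠ 0 := Nat.cast_ne_zero.mpr (NeZero.ne p)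
  set A := Apairs J m π c u with hA
  set S := ∑ P ∈ A, chi p (gf m π d h h' P) with hS
  have key : (p : ℂ) * S = 0 := by
    have step1 : (p : ℂ) * S = ∑ _z : ZMod p, S := by
      rw [Finset.sum_const, card_univ, ZMod.card, nsmul_eq_mul]
    have step2 : ∀ z : ZMod p, S = ∑ P ∈ A, chi p (gf m π d h h' (Tsh m π z P)) := by
      intro z
      apply Finset.sum_nbij' (i := Tsh m π (-z)) (j := Tsh m π z)
      · intro P hP
        exact Tsh_mem hπinj hπran hP hu (-z)
      · intro P hP
        exact Tsh_mem hπinj hπran hP hu z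
      · intro P hP
        have := Tsh_Tsh (m := m) (π := π) (P := P) (-z)
        rwa [neg_neg] at this
      · intro P hP
        exact Tsh_Tsh (m := m) (π := π) (P := P) z
      · intro P hP
        congr 1
        rw [show Tsh m π z (Tsh m π (-z) P) = P from by
          have := Tsh_Tsh (m := m) (π := π) (P := P) (-z); rwa [neg_neg] at this]
    have step3 : (p : ℂ) * S = ∑ P ∈ A, ∑ z : ZMod p,
        chi p (gf m π d h h' (Tsh m π z P)) := by
      rw [step1, sum_congr rfl fun z _ => step2 z, Finset.sum_comm]
    rw [step3]
    apply Finset.sum_eq_zero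
    intro P hP
    have hR := apairs_Rset_nonempty hπran hP hu
    have hδ : P.1 (π (rIdx m π P.1 P.2) (bIdx m π P.1 P.2)) -
        P.2 (π (rIdx m π P.1 P.2) (bIdx m π P.1 P.2)) ≠ 0 :=
      sub_ne_zero.mpr (bIdx_ne hR)
    calc ∑ z : ZMod p, chi p (gf m π d h h' (Tsh m π z P))
        = ∑ z : ZMod p, chi p (gf m π d h h' P) *
            chi p (z * (P.1 (π (rIdx m π P.1 P.2) (bIdx m π P.1 P.2)) -
              P.2 (π (rIdx m π P.1 P.2) (bIdx m π P.1 P.2)))) := by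
          apply sum_congr rfl
          intro z _
          rw [Tsh_gf hπinj hπran hm h h' hP hu z, chi_add]
      _ = 0 := by
          rw [← mul_sum, sum_chi_mul p hδ, mul_zero]
  rcases mul_eq_zero.mp key with hbad | hok
  · exact absurd hbad hp0
  · exact hok

end ShiftSec

section DiagSec

variable [NeZero p] [NeZero t] {J : Fin k → Fin n} {d : Fin n → ZMod p} {c : Fin k → ZMod p}

def Bset (J : Fin k → Fin n) (c : Fin k → ZMod p) : Finset (Fin n → ZMod p) :=
  univ.filter fun v => ∀ α, v (J α) = c α

lemma gf_diag (h h' : Fin t → ZMod p) (v : Fin n → ZMod p) :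
    gf m π d h h' (v, v) = ∑ r, (h r - h' r) * v (π r (m r - 1)) := by
  rw [gf]
  show F0 m π d v - F0 m π d v + ∑ r : Fin t, h r * v (π r (m r - 1)) -
    ∑ r : Fin t, h' r * v (π r (m r - 1)) = _
  rw [sub_self, zero_add, ← Finset.sum_sub_distrib]
  exact sum_congr rfl fun r _ => (sub_mul _ _ _).symm

lemma sum_Apairs_diag (h h' : Fin t → ZMod p) :
    ∑ P ∈ Apairs J m π c 0, chi p (gf m π d h h' P) =
      ∑ v ∈ Bset J c, chi p (∑ r, (h r - h' r) * v (π r (m r - 1))) := by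
  apply Finset.sum_nbij' (i := fun P => P.1) (j := fun v => (v, v))
  · intro P hP
    exact mem_filter.mpr ⟨mem_univ _, (mem_Apairs.mp hP).2.1⟩
  · intro v hv
    rw [mem_Apairs]
    exact ⟨by rw [sub_self], (mem_filter.mp hv).2, (mem_filter.mp hv).2, fun r => rfl⟩
  · intro P hP
    have henc := (mem_Apairs.mp hP).1
    have : encode p P.1 = encode p P.2 := by
      have := sub_eq_zero.mp henc
      exact_mod_cast this.symm
    have h12 : P.1 = P.2 := encode_inj this
    rw [Prod.ext_iff]
    exact ⟨rfl, h12⟩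
  · intro v hv
    rfl
  · intro P hP
    have henc := (mem_Apairs.mp hP).1
    have : encode p P.1 = encode p P.2 := by
      have := sub_eq_zero.mp henc
      exact_mod_cast this.symm
    have h12 : P.1 = P.2 := encode_inj this
    rw [show P = (P.1, P.1) from by rw [Prod.ext_iff]; exact ⟨rfl, h12.symm⟩]
    rw [gf_diag]

lemma card_Bset (hJinj : Function.Injective J) (hk : 1 ≤ k) :
    (Bset J c).card = p ^ (n - k) := by
  haveI : Nonempty (Fin k) := ⟨⟨0, hk⟩⟩
  have hcard : (Bset J c).card = Fintype.card {v : Fin n → ZMod p // ∀ α, v (J α) = c α} :=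
    (Fintype.card_subtype _).symm
  have e : {v : Fin n → ZMod p // ∀ α, v (J α) = c α} ≃
      ({i : Fin n // i ∉ Set.range J} → ZMod p) := by
    refine
      { toFun := fun v i => v.1 i.1
        invFun := fun g => ⟨fun i => if hi : i ∈ Set.range J
            then c (Function.invFun J i) else g ⟨i, hi⟩, ?_⟩
        left_inv := ?_
        right_inv := ?_ }
    · intro α
      dsimp only
      rw [dif_pos ⟨α, rfl⟩]
      congr 1
      exact Function.leftInverse_invFun hJinj α
    · intro v
      apply Subtype.ext
      funext i
      by_cases hi : i ∈ Set.range J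
      · show (if hi' : i ∈ Set.range J then c (Function.invFun J i) else _) = v.1 i
        rw [dif_pos hi]
        obtain ⟨α, rfl⟩ := hi
        rw [Function.leftInverse_invFun hJinj α]
        exact (v.2 α).symm
      · show (if hi' : i ∈ Set.range J then c (Function.invFun J i) else _) = v.1 i
        rw [dif_neg hi]
    · intro g
      funext i
      show (if hi' : i.1 ∈ Set.range J then c (Function.invFun J i.1) else g ⟨i.1, _⟩) = g i
      rw [dif_neg i.2]
  rw [hcard, Fintype.card_congr e, Fintype.card_fun, ZMod.card]
  congr 1
  have h1 : Fintype.card {i : Fin n // i ∉ Set.range J} =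
      Fintype.card (Fin n) - Fintype.card {i : Fin n // i ∈ Set.range J} :=
    Fintype.card_subtype_compl _
  have h2 : Fintype.card {i : Fin n // i ∈ Set.range J} = k := by
    have := Set.card_range_of_injective hJinj
    rw [Fintype.card_fin] at this
    exact this
  rw [h1, h2, Fintype.card_fin]

lemma sum_Bset_ne
    (hπinj : Function.Injective fun q : Σ r : Fin t, Fin (m r) => π q.1 (q.2 : ℕ))
    (hπran : Set.range (fun q : Σ r : Fin t, Fin (m r) => π q.1 (q.2 : ℕ)) =
      {i : Fin n | i ∉ Set.range J})
    (hm : ∀ r, 1 ≤ m r) {h h' : Fin t → ZMod p} (hne : h ≠ h') :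
    ∑ v ∈ Bset J c, chi p (∑ r, (h r - h' r) * v (π r (m r - 1))) = 0 := by
  obtain ⟨r0, hr0⟩ := Function.ne_iff.mp hne
  have hδ0 : h r0 - h' r0 ≠ 0 := sub_ne_zero.mpr hr0
  have hqval : m r0 - 1 < m r0 := by have := hm r0; omega
  have hqJ : π r0 (m r0 - 1) ∉ Set.range J := slot_not_in_J hπran hqval
  have hmemup : ∀ (y : ZMod p) (v : Fin n → ZMod p), v ∈ Bset J c →
      Function.update v (π r0 (m r0 - 1)) y ∈ Bset J c := by
    intro y v hv
    refine mem_filter.mpr ⟨mem_univ _, fun α => ?_⟩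
    rw [Function.update_of_ne (fun hh => hqJ ⟨α, hh⟩)]
    exact (mem_filter.mp hv).2 α
  apply sum_shift_zero (Bset J c) _
    (fun v => Function.update v (π r0 (m r0 - 1)) (v (π r0 (m r0 - 1)) + 1))
    (fun v => Function.update v (π r0 (m r0 - 1)) (v (π r0 (m r0 - 1)) - 1))
    (fun v hv => hmemup _ v hv) (fun v hv => hmemup _ v hv)
    ?_ ?_ (chi p (h r0 - h' r0)) (chi_ne_one p hδ0) ?_
  · intro v _
    rw [Function.update_self, Function.update_idem, add_sub_cancel_right,
      Function.update_eq_self]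
  · intro v _
    rw [Function.update_self, Function.update_idem, sub_add_cancel,
      Function.update_eq_self]
  · intro v _
    have hpt : ∀ r : Fin t, (h r - h' r) *
        Function.update v (π r0 (m r0 - 1)) (v (π r0 (m r0 - 1)) + 1) (π r (m r - 1))
          = (h r - h' r) * v (π r (m r - 1)) + (if r = r0 then h r0 - h' r0 else 0) := by
      intro r
      by_cases hr : r = r0
      · subst hr
        rw [if_pos rfl, Function.update_self]
        ring
      · have hne2 : π r (m r - 1) ≠ π r0 (m r0 - 1) := by
          intro hh
          exact hr ((slot_eq hπinj (by have := hm r; omega) hqval).mp hh).1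
        rw [if_neg hr, Function.update_of_ne hne2, add_zero]
    rw [sum_congr rfl fun r _ => hpt r, Finset.sum_add_distrib,
      Finset.sum_ite_eq' univ r0 (fun _ => h r0 - h' r0), if_pos (mem_univ _), chi_add]
    ring

end DiagSec

section Reduce

variable [NeZero p] [NeZero t] {J : Fin k → Fin n} {d : Fin n → ZMod p} {c : Fin k → ZMod p}

lemma psiRes_encode (f' : (Fin n → ZMod p) → ZMod p) (J : Fin k → Fin n) (c : Fin k → ZMod p)
    (v : Fin n → ZMod p) :
    psiRes p n k f' J c (encode p v) =
      if ∀ α, v (J α) = c α then chi p (f' v) else 0 := by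
  have harg : (fun kk : Fin n => digitZ p (encode p v) (kk : ℕ)) = v :=
    funext fun γ => digit_encode v γ
  by_cases hc' : ∀ α : Fin k, v (J α) = c α
  · rw [psiRes, if_pos (fun α : Fin k => (digit_encode v (J α)).trans (hc' α)), psiSeq,
      harg, if_pos hc']
    rfl
  · rw [psiRes, if_neg, if_neg hc']
    intro hcontra
    exact hc' fun α => ((digit_encode v (J α)).symm.trans (hcontra α))

lemma cseq_encode (f : (Fin n → ZMod p) → ZMod p)
    (hf : ∀ x, f x =
      (∑ r : Fin t, ∑ α ∈ Finset.range (m r - 1), x (π r α) * x (π r (α + 1))) +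
        ∑ α : Fin n, d α * x α)
    (h s : Fin t → ZMod p) (v : Fin n → ZMod p) :
    psiRes p n k (fun x => f x + (∑ r : Fin t, s r * x (π r 0)) +
        ∑ r : Fin t, h r * x (π r (m r - 1))) J c (encode p v) =
      if ∀ α, v (J α) = c α
      then chi p (F0 m π d v + (∑ r : Fin t, s r * v (π r 0)) +
        ∑ r : Fin t, h r * v (π r (m r - 1))) else 0 := by
  rw [psiRes_encode]
  congr 2
  rw [hf v, F0]

lemma sum_aper_eq
    (f : (Fin n → ZMod p) → ZMod p)
    (hf : ∀ x, f x =
      (∑ r : Fin t, ∑ α ∈ Finset.range (m r - 1), x (π r α) * x (π r (α + 1))) +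
        ∑ α : Fin n, d α * x α)
    (cseq : (Fin t → ZMod p) → (Fin t → ZMod p) → ℕ → ℂ)
    (hc : ∀ h s, cseq h s = psiRes p n k
      (fun x => f x + (∑ r : Fin t, s r * x (π r 0)) +
        ∑ r : Fin t, h r * x (π r (m r - 1))) J c)
    (h h' : Fin t → ZMod p) (u : ℤ) :
    ∑ s : Fin t → ZMod p, aper (p ^ n) (cseq h s) (cseq h' s) u =
      ((p : ℂ)) ^ t * ∑ P ∈ Apairs J m π c u, chi p (gf m π d h h' P) := by
  -- Step 1: reindex by digit vectors
  have step1 : ∀ s : Fin t → ZMod p, aper (p ^ n) (cseq h s) (cseq h' s) u =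
      ∑ v : Fin n → ZMod p, ∑ w : Fin n → ZMod p,
        if ((encode p w : ℤ) - (encode p v : ℤ) = u)
        then cseq h s (encode p v) * (starRingEnd ℂ) (cseq h' s (encode p w)) else 0 := by
    intro s
    rw [aper, sum_range_pow_eq (F := fun i => ∑ j ∈ Finset.range (p ^ n),
      if (j : ℤ) - (i : ℤ) = u then cseq h s i * (starRingEnd ℂ) (cseq h' s j) else 0)]
    apply sum_congr rfl
    intro v _
    rw [sum_range_pow_eq (F := fun j =>
      if (j : ℤ) - ((encode p v : ℕ) : ℤ) = u
      then cseq h s (encode p v) * (starRingEnd ℂ) (cseq h' s j) else 0)]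
  -- Step 2: pointwise evaluation
  have step2 : ∀ (s : Fin t → ZMod p) (v w : Fin n → ZMod p),
      (if ((encode p w : ℤ) - (encode p v : ℤ) = u)
        then cseq h s (encode p v) * (starRingEnd ℂ) (cseq h' s (encode p w)) else 0) =
      if ((encode p w : ℤ) - (encode p v : ℤ) = u) ∧ (∀ α, v (J α) = c α) ∧
          (∀ α, w (J α) = c α)
      then chi p (gf m π d h h' (v, w)) *
        chi p (∑ r : Fin t, s r * (v (π r 0) - w (π r 0))) else 0 := by
    intro s v w
    rw [hc h s, hc h' s, cseq_encode f hf h s v, cseq_encode f hf h' s w]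
    by_cases h1 : ((encode p w : ℤ) - (encode p v : ℤ) = u)
    · by_cases h2 : ∀ α, v (J α) = c α
      · by_cases h3 : ∀ α, w (J α) = c α
        · rw [if_pos h1, if_pos h2, if_pos h3, if_pos ⟨h1, h2, h3⟩]
          rw [chi_conj, ← chi_add, ← sub_eq_add_neg, ← chi_add]
          congr 1
          have hsub : ∑ r : Fin t, s r * (v (π r 0) - w (π r 0)) =
              (∑ r : Fin t, s r * v (π r 0)) - ∑ r : Fin t, s r * w (π r 0) := by
            rw [← Finset.sum_sub_distrib]
            exact sum_congr rfl fun r _ => mul_sub _ _ _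
          rw [gf, hsub]
          dsimp only
          ring
        · have hnc : ¬(((encode p w : ℤ) - (encode p v : ℤ) = u) ∧
              (∀ α, v (J α) = c α) ∧ (∀ α, w (J α) = c α)) := by tauto
          rw [if_pos h1, if_pos h2, if_neg h3, if_neg hnc, map_zero, mul_zero]
      · have hnc : ¬(((encode p w : ℤ) - (encode p v : ℤ) = u) ∧
            (∀ α, v (J α) = c α) ∧ (∀ α, w (J α) = c α)) := by tauto
        rw [if_pos h1, if_neg h2, if_neg hnc, zero_mul]
    · have hnc : ¬(((encode p w : ℤ) - (encode p v : ℤ) = u) ∧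
          (∀ α, v (J α) = c α) ∧ (∀ α, w (J α) = c α)) := by tauto
      rw [if_neg h1, if_neg hnc]
  -- Step 3: swap sums, evaluate s-sum
  calc ∑ s : Fin t → ZMod p, aper (p ^ n) (cseq h s) (cseq h' s) u
      = ∑ s : Fin t → ZMod p, ∑ v : Fin n → ZMod p, ∑ w : Fin n → ZMod p,
          (if ((encode p w : ℤ) - (encode p v : ℤ) = u) ∧ (∀ α, v (J α) = c α) ∧
              (∀ α, w (J α) = c α)
          then chi p (gf m π d h h' (v, w)) *
            chi p (∑ r : Fin t, s r * (v (π r 0) - w (π r 0))) else 0) := by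
        apply sum_congr rfl
        intro s _
        rw [step1 s]
        exact sum_congr rfl fun v _ => sum_congr rfl fun w _ => step2 s v w
    _ = ∑ v : Fin n → ZMod p, ∑ w : Fin n → ZMod p, ∑ s : Fin t → ZMod p,
          (if ((encode p w : ℤ) - (encode p v : ℤ) = u) ∧ (∀ α, v (J α) = c α) ∧
              (∀ α, w (J α) = c α)
          then chi p (gf m π d h h' (v, w)) *
            chi p (∑ r : Fin t, s r * (v (π r 0) - w (π r 0))) else 0) := by
        rw [Finset.sum_comm]
        exact sum_congr rfl fun v _ => Finset.sum_comm
    _ = ∑ v : Fin n → ZMod p, ∑ w : Fin n → ZMod p,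
          (if ((encode p w : ℤ) - (encode p v : ℤ) = u) ∧ (∀ α, v (J α) = c α) ∧
              (∀ α, w (J α) = c α) ∧ (∀ r, v (π r 0) = w (π r 0))
          then ((p : ℂ)) ^ t * chi p (gf m π d h h' (v, w)) else 0) := by
        apply sum_congr rfl
        intro v _
        apply sum_congr rfl
        intro w _
        by_cases hC : ((encode p w : ℤ) - (encode p v : ℤ) = u) ∧ (∀ α, v (J α) = c α) ∧
            (∀ α, w (J α) = c α)
        · simp only [if_pos hC, ← mul_sum, sum_chi_fun p (fun r => v (π r 0) - w (π r 0))]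
          by_cases hz : ∀ r, v (π r 0) = w (π r 0)
          · rw [if_pos (fun r => sub_eq_zero.mpr (hz r)), if_pos ⟨hC.1, hC.2.1, hC.2.2, hz⟩]
            ring
          · rw [if_neg, if_neg, mul_zero]
            · rintro ⟨-, -, -, hzz⟩
              exact hz hzz
            · intro hzz
              exact hz fun r => sub_eq_zero.mp (hzz r)
        · rw [if_neg (fun hh => hC ⟨hh.1, hh.2.1, hh.2.2.1⟩)]
          simp only [if_neg hC, Finset.sum_const_zero]
    _ = ((p : ℂ)) ^ t * ∑ P ∈ Apairs J m π c u, chi p (gf m π d h h' P) := by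
        conv_rhs => rw [mul_sum, Apairs, Finset.sum_filter, Fintype.sum_prod_type]

end Reduce

section Support

variable [NeZero p] {J : Fin k → Fin n} {c : Fin k → ZMod p}

lemma support_psiRes (hJinj : Function.Injective J) (hk : 1 ≤ k)
    (f' : (Fin n → ZMod p) → ZMod p) :
    {x : ℕ | x < p ^ n ∧ psiRes p n k f' J c x ≠ 0} =
      {x : ℕ | ∃ b : Fin n → ℕ, (∀ α, b α < p) ∧
        x = (∑ i : Fin k, (c i).val * p ^ (J i : ℕ)) +
          ∑ α ∈ Finset.univ.filter (fun α : Fin n => α ∉ Set.range J),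
            b α * p ^ (α : ℕ)} := by
  haveI : Nonempty (Fin k) := ⟨⟨0, hk⟩⟩
  have hp0 : 0 < p := Nat.pos_of_ne_zero (NeZero.ne p)
  have himg : Finset.univ.filter (fun α : Fin n => α ∈ Set.range J) = Finset.image J univ := by
    ext a
    simp [Set.mem_range, Finset.mem_image]
  ext x
  simp only [Set.mem_setOf_eq]
  constructor
  · rintro ⟨hx, hne⟩
    have hcond : ∀ α : Fin k, digitZ p x ((J α : ℕ)) = c α := by
      by_contra hcon
      rw [psiRes, if_neg hcon] at hne
      exact hne rfl
    refine ⟨fun α => x / p ^ (α : ℕ) % p, fun α => Nat.mod_lt _ hp0, ?_⟩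
    have hsum := eq_sum_digits (n := n) hx
    have hsplit := Finset.sum_filter_add_sum_filter_not univ
      (fun α : Fin n => α ∈ Set.range J) (fun α : Fin n => x / p ^ (α : ℕ) % p * p ^ (α : ℕ))
    have hmempart : ∑ α ∈ Finset.univ.filter (fun α : Fin n => α ∈ Set.range J),
        x / p ^ (α : ℕ) % p * p ^ (α : ℕ) = ∑ i : Fin k, (c i).val * p ^ (J i : ℕ) := by
      rw [himg, Finset.sum_image (fun a _ b _ hab => hJinj hab)]
      apply sum_congr rfl
      intro i _
      congr 1
      have hv : ((x / p ^ (J i : ℕ) % p : ℕ) : ZMod p).val = x / p ^ (J i : ℕ) % p :=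
        ZMod.val_cast_of_lt (Nat.mod_lt _ hp0)
      have := hcond i
      rw [digitZ] at this
      rw [← this, hv]
    rw [← hmempart]
    exact hsum.trans hsplit.symm
  · rintro ⟨b, hb, rfl⟩
    set w : Fin n → ℕ := fun α =>
      if α ∈ Set.range J then (c (Function.invFun J α)).val else b α with hw
    have hwlt : ∀ α, w α < p := by
      intro α
      rw [hw]
      dsimp only
      split_ifs
      · exact ZMod.val_lt _
      · exact hb α
    set v : Fin n → ZMod p := fun α => ((w α : ℕ) : ZMod p) with hv
    have hvval : ∀ α, (v α).val = w α := fun α => ZMod.val_cast_of_lt (hwlt α)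
    have hxv : (∑ i : Fin k, (c i).val * p ^ (J i : ℕ)) +
        ∑ α ∈ Finset.univ.filter (fun α : Fin n => α ∉ Set.range J),
          b α * p ^ (α : ℕ) = encode p v := by
      rw [encode]
      rw [← Finset.sum_filter_add_sum_filter_not univ
        (fun α : Fin n => α ∈ Set.range J) (fun α : Fin n => (v α).val * p ^ (α : ℕ))]
      congr 1
      · rw [himg, Finset.sum_image (fun a _ b _ hab => hJinj hab)]
        apply sum_congr rfl
        intro i _
        rw [hvval]
        congr 1
        rw [hw]
        dsimp only
        rw [if_pos ⟨i, rfl⟩, Function.leftInverse_invFun hJinj i]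
      · apply sum_congr rfl
        intro α hα
        rw [hvval]
        congr 1
        rw [hw]
        dsimp only
        rw [if_neg (mem_filter.mp hα).2]
    rw [hxv]
    have hdig : ∀ α : Fin k, digitZ p (encode p v) ((J α : ℕ)) = c α := by
      intro α
      rw [digit_encode v (J α), hv]
      dsimp only
      rw [hw]
      dsimp only
      rw [if_pos ⟨α, rfl⟩, Function.leftInverse_invFun hJinj α]
      simp [ZMod.natCast_val, ZMod.cast_id]
    refine ⟨encode_lt v, ?_⟩
    rw [psiRes, if_pos hdig]
    exact Complex.exp_ne_zero _

end Support

end Main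

end St1

/-- Theorem 1, SNC-CCC: with `J = {j_1 < ⋯ < j_k} ⊆ {1,…,n}`,
`1 ≤ k < n`, `1 ≤ t ≤ n−k`, a partition `{V_1,…,V_t}` of `{1,…,n}∖J` with bijections
`π_r : {1,…,m_r} → V_r` (encoded 0-indexed via `π`, injective on `Σ r, Fin (m r)`
with range the complement of `range J`), the restricted sequences
`c_h^s = ψ((f + ∑_r s_r x_{π_r(1)} + ∑_r h_r x_{π_r(m_r)})|_{x_J = c})` form a
`(p^t,p^t,p^n)`-SNC-CCC, and the support of each `c_h^s` equals
`Ω = { ∑ᵢ cᵢ p^{jᵢ−1} + ∑_{α∉J} b_α p^{α−1} : 0 ≤ b_α ≤ p−1 }`. -/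
theorem statement1 (p n k t : ℕ) [Fact p.Prime] (hn : 1 ≤ n)
    (hk : 1 ≤ k) (hkn : k < n) (ht : 1 ≤ t) (htn : t ≤ n - k)
    (J : Fin k → Fin n) (hJ : StrictMono J)
    (m : Fin t → ℕ) (hm : ∀ r, 1 ≤ m r)
    (π : Fin t → ℕ → Fin n)
    (hπinj : Function.Injective fun q : Σ r : Fin t, Fin (m r) => π q.1 (q.2 : ℕ))
    (hπran : Set.range (fun q : Σ r : Fin t, Fin (m r) => π q.1 (q.2 : ℕ)) =
      {i : Fin n | i ∉ Set.range J})
    (d : Fin n → ZMod p) (c : Fin k → ZMod p)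
    (f : (Fin n → ZMod p) → ZMod p)
    (hf : ∀ x, f x =
      (∑ r : Fin t, ∑ α ∈ Finset.range (m r - 1), x (π r α) * x (π r (α + 1))) +
        ∑ α : Fin n, d α * x α)
    (cseq : (Fin t → ZMod p) → (Fin t → ZMod p) → ℕ → ℂ)
    (hc : ∀ h s, cseq h s = psiRes p n k
      (fun x => f x + (∑ r : Fin t, s r * x (π r 0)) +
        ∑ r : Fin t, h r * x (π r (m r - 1))) J c) :
    (∀ (h h' : Fin t → ZMod p) (u : ℤ), |u| < (p : ℤ) ^ n →
      ∑ s : Fin t → ZMod p, aper (p ^ n) (cseq h s) (cseq h' s) u =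
        if h = h' ∧ u = 0 then ((p : ℂ)) ^ (n + t - k) else 0) ∧
    (∀ h s : Fin t → ZMod p,
      {x : ℕ | x < p ^ n ∧ cseq h s x ≠ 0} =
        {x : ℕ | ∃ b : Fin n → ℕ, (∀ α, b α < p) ∧
          x = (∑ i : Fin k, (c i).val * p ^ (J i : ℕ)) +
            ∑ α ∈ Finset.univ.filter (fun α : Fin n => α ∉ Set.range J),
              b α * p ^ (α : ℕ)}) := by
  haveI : NeZero p := ⟨(Fact.out : p.Prime).ne_zero⟩
  haveI : NeZero t := ⟨by omega⟩
  constructor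
  · intro h h' u _
    rw [St1.sum_aper_eq (J := J) (m := m) (π := π) (d := d) (c := c) f hf cseq hc h h' u]
    by_cases hu0 : u = 0
    · subst hu0
      rw [St1.sum_Apairs_diag (m := m) (π := π) (d := d) h h']
      by_cases hhh : h = h'
      · subst hhh
        have hone : ∀ v ∈ St1.Bset J c,
            St1.chi p (∑ r, (h r - h r) * v (π r (m r - 1))) = 1 := by
          intro v _
          rw [show ∑ r, (h r - h r) * v (π r (m r - 1)) = 0 from
            Finset.sum_eq_zero fun r _ => by rw [sub_self, zero_mul], St1.chi_zero]
        rw [Finset.sum_congr rfl hone, Finset.sum_const,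
          St1.card_Bset hJ.injective hk, nsmul_eq_mul, mul_one,
          if_pos ⟨rfl, rfl⟩]
        push_cast
        rw [← pow_add]
        congr 1
        omega
      · rw [St1.sum_Bset_ne hπinj hπran hm hhh, mul_zero,
          if_neg (fun hcon => hhh hcon.1)]
    · rw [St1.sum_Apairs_zero hπinj hπran hm h h' hu0, mul_zero,
        if_neg (fun hcon => hu0 hcon.2)]
  · intro h s
    rw [hc h s]
    exact St1.support_psiRes hJ.injective hk _
end

section
/- Let p be a prime, n ≥ 1, 1 ≤ t ≤ n, n′ = n+t+1. Let {V_1,…,V_t} be a partition of {1,…,n} into nonempty sets with m_r = |V_r| and bijections π_r : {1,…,m_r} → V_r, and fix the quadratic form Q = Σ_{r=1}^t Σ_{α=1}^{m_r−1} x_{π_r(α)} x_{π_r(α+1)} + Σ_{r=2}^{t+1} c_r x_{n+r} x_{n+1} + Σ_{2≤μ<ν≤t} d_{μν} x_{n+μ} x_{n+ν} + Σ_{r=1}^t x_{π_r(1)} x_{n+r} (with fixed coefficients c_r, d_{μν} ∈ Z_p, c_{t+1} ≠ 0). For parameters (d_1,…,d_n, e_1,…,e_{t+1}, e′) ∈ (Z_p)^{n+t+2},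 define the ZCZ sequence set Z(d,e,e′) = { ξ(Q + Σ_{α=1}^n d_α x_α + Σ_{β=1}^{t+1} e_β x_{n+β} + e′ + Σ_{r=1}^t h_r x_{π_r(m_r)}) : h ∈ (Z_p)^t }. Then every element of every such set lies in the coset ξ(Q) + GRM_p(n′,1), and the number of distinct sets Z(d,e,e′), as (d,e,e′) ranges over (Z_p)^{n+t+2}, is exactly p^{n′+1−t} = p^{n+2}. -/
open Finset

/-- The `Z_p`-valued vector `ξ(f)` of length `p^m` associated with an extended Boolean
function `f : (Z_p)^m → Z_p`: its `x`-th entry is `f(x₁,…,x_m)` where `(x₁,…,x_m)`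
are the base-`p` digits of `x`. -/
def xiVec (p m : ℕ) (f : (Fin m → ZMod p) → ZMod p) : Fin (p ^ m) → ZMod p :=
  fun x => f fun k => digitZ p (x : ℕ) (k : ℕ)

/-- The first-order generalized Reed–Muller code `GRM_p(m,1)`: all evaluation vectors
of affine functions `a₀ + ∑ᵢ aᵢ xᵢ`. -/
def GRM1 (p m : ℕ) : Set (Fin (p ^ m) → ZMod p) :=
  { v | ∃ (a0 : ZMod p) (a : Fin m → ZMod p),
      v = xiVec p m fun x => a0 + ∑ i : Fin m, a i * x i }

/-! ### Auxiliary lemmas -/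

lemma exists_nat_digits (p : ℕ) (hp : 1 < p) :
    ∀ (m : ℕ) (y : Fin m → ℕ), (∀ k, y k < p) →
      ∃ x < p ^ m, ∀ k : Fin m, x / p ^ (k : ℕ) % p = y k := by
  intro m
  induction m with
  | zero => exact fun y _ => ⟨0, by simp, fun k => k.elim0⟩
  | succ m ih =>
    intro y hy
    obtain ⟨x', hx', hd⟩ := ih (fun k => y k.succ) (fun k => hy k.succ)
    refine ⟨y 0 + p * x', ?_, ?_⟩
    · have h1 : y 0 + p * x' < p * (x' + 1) := by have := hy 0; nlinarith
      have h2 : p * (x' + 1) ≤ p * p ^ m := Nat.mul_le_mul_left _ (by omega)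
      calc y 0 + p * x' < p * (x' + 1) := h1
        _ ≤ p * p ^ m := h2
        _ = p ^ (m + 1) := by ring
    · intro k
      induction k using Fin.cases with
      | zero =>
        simp only [Fin.val_zero, pow_zero, Nat.div_one]
        rw [Nat.add_mul_mod_self_left, Nat.mod_eq_of_lt (hy 0)]
      | succ j =>
        have hdiv : (y 0 + p * x') / p = x' := by
          rw [Nat.add_mul_div_left _ _ (by omega : 0 < p), Nat.div_eq_of_lt (hy 0), Nat.zero_add]
        simp only [Fin.val_succ, pow_succ']
        rw [← Nat.div_div_eq_div_mul, hdiv]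
        exact hd j

lemma exists_digits (p : ℕ) [NeZero p] (hp : 1 < p) (m : ℕ) (y : Fin m → ZMod p) :
    ∃ x : Fin (p ^ m), ∀ k : Fin m, digitZ p (x : ℕ) (k : ℕ) = y k := by
  obtain ⟨x, hx, hd⟩ := exists_nat_digits p hp m (fun k => (y k).val) (fun k => (y k).val_lt)
  exact ⟨⟨x, hx⟩, fun k => by simp [digitZ, hd k, ZMod.natCast_val, ZMod.cast_id]⟩

lemma affine_coeff {p M : ℕ} {a0 b0 : ZMod p} {a b : Fin M → ZMod p}
    (hf : ∀ x : Fin M → ZMod p, a0 + ∑ i, a i * x i = b0 + ∑ i, b i * x i) :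
    a0 = b0 ∧ a = b := by
  have h0 : a0 = b0 := by have := hf 0; simpa using this
  refine ⟨h0, funext fun i => ?_⟩
  have := hf (fun j => if j = i then 1 else 0)
  simp only [mul_ite, mul_one, mul_zero, Finset.sum_ite_eq', Finset.mem_univ, if_true, h0] at this
  exact add_left_cancel this

lemma xi_affine_inj {p : ℕ} [Fact p.Prime] {M : ℕ} (Q : (Fin M → ZMod p) → ZMod p)
    {a0 b0 : ZMod p} {a b : Fin M → ZMod p}
    (h : xiVec p M (fun x => Q x + (a0 + ∑ i, a i * x i)) =
         xiVec p M (fun x => Q x + (b0 + ∑ i, b i * x i))) : a0 = b0 ∧ a = b := by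
  have hp : 1 < p := (Fact.out : p.Prime).one_lt
  apply affine_coeff (p := p)
  intro x
  obtain ⟨z, hz⟩ := exists_digits p hp M x
  have := congrFun h z
  simp only [xiVec, hz] at this
  exact add_left_cancel this

section Aux
variable {p n t : ℕ}

def hcF (g : Fin t → Fin n) (h : Fin t → ZMod p) : Fin n → ZMod p :=
  fun α => ∑ r, if g r = α then h r else 0

def AvecF (g : Fin t → Fin n) (d : Fin n → ZMod p) (e : Fin (t + 1) → ZMod p)
    (h : Fin t → ZMod p) : Fin (n + t + 1) → ZMod p :=
  fun i => if hi : (i : ℕ) < n then d ⟨i, hi⟩ + hcF g h ⟨i, hi⟩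
           else e ⟨(i : ℕ) - n, by have := i.isLt; omega⟩

lemma hcF_zero (g : Fin t → Fin n) (α : Fin n) : hcF g (0 : Fin t → ZMod p) α = 0 := by
  simp [hcF]

lemma hcF_add (g : Fin t → Fin n) (h₁ h₂ : Fin t → ZMod p) (α : Fin n) :
    hcF g (h₁ + h₂) α = hcF g h₁ α + hcF g h₂ α := by
  simp only [hcF, Pi.add_apply, ← Finset.sum_add_distrib]
  exact Finset.sum_congr rfl fun r _ => by split <;> simp

lemma hcF_not (g : Fin t → Fin n) (h : Fin t → ZMod p) (α : Fin n) (hα : ∀ r, g r ≠ α) :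
    hcF g h α = 0 := by
  simp only [hcF]
  exact Finset.sum_eq_zero fun r _ => if_neg (hα r)

lemma hcF_g (g : Fin t → Fin n) (ginj : Function.Injective g) (h : Fin t → ZMod p) (r : Fin t) :
    hcF g h (g r) = h r := by
  simp only [hcF]
  have : ∀ r' : Fin t, (g r' = g r) = (r' = r) :=
    fun r' => propext ⟨fun e => ginj e, fun e => by rw [e]⟩
  simp only [this]
  simp

lemma AvecF_left (g : Fin t → Fin n) (d : Fin n → ZMod p) (e : Fin (t + 1) → ZMod p)
    (h : Fin t → ZMod p) (α : Fin n) (pf : n ≤ n + t + 1) :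
    AvecF g d e h (Fin.castLE pf α) = d α + hcF g h α := by
  simp [AvecF, α.isLt]

lemma AvecF_right (g : Fin t → Fin n) (d : Fin n → ZMod p) (e : Fin (t + 1) → ZMod p)
    (h : Fin t → ZMod p) (β : Fin (t + 1)) (pf : n + (β : ℕ) < n + t + 1) :
    AvecF g d e h ⟨n + (β : ℕ), pf⟩ = e β := by
  simp only [AvecF]
  rw [dif_neg (by omega)]
  congr 1
  exact Fin.ext (by simp)

lemma sum_split (F : Fin (n + t + 1) → ZMod p) :
    ∑ i, F i = (∑ α : Fin n, F (Fin.castLE (by linarith) α)) +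
      ∑ β : Fin (t + 1), F ⟨n + (β : ℕ), by have := β.isLt; linarith⟩ :=
  Fin.sum_univ_add (f := fun i : Fin (n + (t + 1)) => F i)

lemma Avec_sum (g : Fin t → Fin n) (d : Fin n → ZMod p) (e : Fin (t + 1) → ZMod p)
    (h : Fin t → ZMod p) (x : Fin (n + t + 1) → ZMod p) :
    ∑ i, AvecF g d e h i * x i =
      ((∑ α : Fin n, d α * x (Fin.castLE (by linarith) α)) +
        ∑ β : Fin (t + 1), e β * x ⟨n + (β : ℕ), by have := β.isLt; linarith⟩) +
        ∑ r : Fin t, h r * x (Fin.castLE (by linarith) (g r)) := by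
  rw [sum_split (fun i => AvecF g d e h i * x i)]
  simp only [AvecF_left, AvecF_right]
  rw [show (∑ α : Fin n, (d α + hcF g h α) * x (Fin.castLE (by linarith) α)) =
      (∑ α : Fin n, d α * x (Fin.castLE (by linarith) α)) +
      ∑ α : Fin n, hcF g h α * x (Fin.castLE (by linarith) α) by
    rw [← Finset.sum_add_distrib]; exact Finset.sum_congr rfl fun α _ => by ring]
  have : (∑ α : Fin n, hcF g h α * x (Fin.castLE (by linarith) α)) =
      ∑ r : Fin t, h r * x (Fin.castLE (by linarith) (g r)) := by
    simp only [hcF, Finset.sum_mul]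
    rw [Finset.sum_comm]
    refine Finset.sum_congr rfl fun r _ => ?_
    rw [Finset.sum_congr rfl (fun α _ => by rw [ite_mul, zero_mul] :
      ∀ α ∈ univ, (if g r = α then h r else 0) * x (Fin.castLE (by linarith) α)
        = if g r = α then h r * x (Fin.castLE (by linarith) α) else 0)]
    simp [Finset.sum_ite_eq]
  rw [this]; ring

def extF (g : Fin t → Fin n) (v : {α : Fin n // ∀ r, g r ≠ α} → ZMod p) : Fin n → ZMod p :=
  fun α => if hα : ∀ r, g r ≠ α then v ⟨α, hα⟩ else 0

lemma extF_pos (g : Fin t → Fin n) (v : {α : Fin n // ∀ r, g r ≠ α} → ZMod p) (α : Fin n)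
    (hα : ∀ r, g r ≠ α) : extF g v α = v ⟨α, hα⟩ := dif_pos hα

end Aux

/-- Corollary 2: every member of every ZCZ sequence set
`Z(d,e,e')` (with fixed quadratic form `Q`) lies in the second-order coset
`ξ(Q) + GRM_p(n',1)` of the first-order GRM code (`n' = n+t+1`), and the number of
distinct sets `Z(d,e,e')`, as `(d,e,e')` ranges over `(Z_p)^{n+t+2}`, is exactly
`p^{n'+1-t} = p^{n+2}`. -/
theorem statement5
    (p n t : ℕ) [Fact p.Prime] (hn : 1 ≤ n) (ht : 1 ≤ t) (htn : t ≤ n)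
    (m : Fin t → ℕ) (hm : ∀ r, 1 ≤ m r)
    (π : Fin t → ℕ → Fin n)
    (hπ : Function.Bijective fun q : Σ r : Fin t, Fin (m r) => π q.1 (q.2 : ℕ))
    (cg : Fin t → ZMod p) (hcg : cg ⟨t - 1, by omega⟩ ≠ 0)
    (dg : Fin t → Fin t → ZMod p)
    (Q : (Fin (n + t + 1) → ZMod p) → ZMod p)
    (hQ : ∀ x, Q x =
      (∑ r : Fin t, ∑ α ∈ Finset.range (m r - 1),
        x (Fin.castLE (by omega) (π r α)) * x (Fin.castLE (by omega) (π r (α + 1)))) +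
      (∑ r : Fin t, cg r *
        (x ⟨n + 1 + (r : ℕ), by have := r.isLt; omega⟩ * x ⟨n, by omega⟩)) +
      (∑ μ : Fin t, ∑ ν : Fin t,
        if (μ : ℕ) < (ν : ℕ) ∧ (ν : ℕ) + 2 ≤ t then
          dg μ ν * (x ⟨n + 1 + (μ : ℕ), by have := μ.isLt; omega⟩ *
            x ⟨n + 1 + (ν : ℕ), by have := ν.isLt; omega⟩)
        else 0) +
      (∑ r : Fin t, x (Fin.castLE (by omega) (π r 0)) *
        x ⟨n + (r : ℕ), by have := r.isLt; omega⟩))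
    (Zset : (Fin n → ZMod p) → (Fin (t + 1) → ZMod p) → ZMod p →
      Set (Fin (p ^ (n + t + 1)) → ZMod p))
    (hZ : ∀ d e e', Zset d e e' =
      { v | ∃ h : Fin t → ZMod p, v = xiVec p (n + t + 1) fun x =>
          Q x + (∑ α : Fin n, d α * x (Fin.castLE (by omega) α)) +
            (∑ β : Fin (t + 1), e β * x ⟨n + (β : ℕ), by have := β.isLt; omega⟩) + e' +
            ∑ r : Fin t, h r * x (Fin.castLE (by omega) (π r (m r - 1))) })
    :
    (∀ (d : Fin n → ZMod p) (e : Fin (t + 1) → ZMod p) (e' : ZMod p),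
      ∀ v ∈ Zset d e e', ∃ w ∈ GRM1 p (n + t + 1), v = xiVec p (n + t + 1) Q + w) ∧
    Set.ncard {S : Set (Fin (p ^ (n + t + 1)) → ZMod p) |
        ∃ (d : Fin n → ZMod p) (e : Fin (t + 1) → ZMod p) (e' : ZMod p),
          S = Zset d e e'} = p ^ (n + 2) := by
  classical
  haveI : NeZero p := ⟨(Fact.out : p.Prime).ne_zero⟩
  set g : Fin t → Fin n := fun r => π r (m r - 1) with hgdef
  have ginj : Function.Injective g := by
    intro r r' hrr
    have h1 : (fun q : Σ r : Fin t, Fin (m r) => π q.1 (q.2 : ℕ))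
        ⟨r, ⟨m r - 1, by have := hm r; omega⟩⟩ =
      (fun q : Σ r : Fin t, Fin (m r) => π q.1 (q.2 : ℕ))
        ⟨r', ⟨m r' - 1, by have := hm r'; omega⟩⟩ := hrr
    exact congrArg Sigma.fst (hπ.1 h1)
  -- canonical form of the defining functions
  have hZ' : ∀ d e e', Zset d e e' =
      { v | ∃ h : Fin t → ZMod p, v = xiVec p (n + t + 1) fun x =>
          Q x + (e' + ∑ i, AvecF g d e h i * x i) } := by
    intro d e e'
    rw [hZ]
    have funeq : ∀ h : Fin t → ZMod p,
        (fun x : Fin (n + t + 1) → ZMod p =>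
          Q x + (∑ α : Fin n, d α * x (Fin.castLE (by omega) α)) +
            (∑ β : Fin (t + 1), e β * x ⟨n + (β : ℕ), by have := β.isLt; omega⟩) + e' +
            ∑ r : Fin t, h r * x (Fin.castLE (by omega) (g r))) =
        fun x => Q x + (e' + ∑ i, AvecF g d e h i * x i) := by
      intro h
      funext x
      rw [Avec_sum]
      ring
    ext v
    simp only [Set.mem_setOf_eq]
    constructor
    · rintro ⟨h, rfl⟩
      exact ⟨h, congrArg (xiVec p (n + t + 1)) (funeq h)⟩
    · rintro ⟨h, rfl⟩
      exact ⟨h, (congrArg (xiVec p (n + t + 1)) (funeq h)).symm⟩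
  -- the key criterion for equality of two ZCZ sequence sets
  have key : ∀ d e e' d2 e2 e2', Zset d e e' = Zset d2 e2 e2' ↔
      (e = e2 ∧ e' = e2' ∧ ∀ α, (∀ r, g r ≠ α) → d α = d2 α) := by
    intro d e e' d2 e2 e2'
    constructor
    · intro hset
      have hmem : xiVec p (n + t + 1)
          (fun x => Q x + (e' + ∑ i, AvecF g d e 0 i * x i)) ∈ Zset d e e' := by
        rw [hZ']; exact ⟨0, rfl⟩
      rw [hset, hZ'] at hmem
      obtain ⟨h, hv⟩ := hmem
      obtain ⟨h0, hA⟩ := xi_affine_inj Q hv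
      refine ⟨?_, h0, ?_⟩
      · funext β
        have hb := congrFun hA ⟨n + (β : ℕ), by have := β.isLt; omega⟩
        rwa [AvecF_right, AvecF_right] at hb
      · intro α hα
        have hb := congrFun hA (Fin.castLE (by omega) α)
        rwa [AvecF_left, AvecF_left, hcF_zero, hcF_not g h α hα, add_zero, add_zero] at hb
    · rintro ⟨rfl, rfl, hd⟩
      have hAA : ∀ h : Fin t → ZMod p,
          AvecF g d e h = AvecF g d2 e (h + fun r => d (g r) - d2 (g r)) := by
        intro h
        funext i
        by_cases hi : (i : ℕ) < n
        · simp only [AvecF, dif_pos hi]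
          rw [hcF_add]
          set α : Fin n := ⟨(i : ℕ), hi⟩
          by_cases hα : ∀ r, g r ≠ α
          · rw [hcF_not g (fun r => d (g r) - d2 (g r)) α hα, hd α hα, add_zero]
          · push_neg at hα
            obtain ⟨r, hr⟩ := hα
            rw [← hr]
            simp only [hcF_g g ginj]
            ring
        · simp only [AvecF, dif_neg hi]
      rw [hZ' d e e', hZ' d2 e e']
      ext v
      simp only [Set.mem_setOf_eq]
      constructor
      · rintro ⟨h, rfl⟩
        exact ⟨h + fun r => d (g r) - d2 (g r), by rw [hAA h]⟩
      · rintro ⟨h, rfl⟩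
        refine ⟨h - fun r => d (g r) - d2 (g r), ?_⟩
        have hh : (h - fun r => d (g r) - d2 (g r)) + (fun r => d (g r) - d2 (g r)) = h := by
          funext r; simp
        rw [hAA (h - fun r => d (g r) - d2 (g r)), hh]

  constructor
  · -- Part 1: coset membership
    intro d e e' v hv
    rw [hZ'] at hv
    obtain ⟨h, rfl⟩ := hv
    refine ⟨xiVec p (n + t + 1) (fun x => e' + ∑ i, AvecF g d e h i * x i),
      ⟨e', AvecF g d e h, rfl⟩, ?_⟩
    funext z
    rfl
  · -- Part 2: counting
    set Φ : ({α : Fin n // ∀ r, g r ≠ α} → ZMod p) × (Fin (t + 1) → ZMod p) × ZMod p →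
        Set (Fin (p ^ (n + t + 1)) → ZMod p) :=
      fun q => Zset (extF g q.1) q.2.1 q.2.2 with hΦdef
    have hrange : {S : Set (Fin (p ^ (n + t + 1)) → ZMod p) |
        ∃ d e e', S = Zset d e e'} = Set.range Φ := by
      ext S
      simp only [Set.mem_setOf_eq, Set.mem_range]
      constructor
      · rintro ⟨d, e, e', rfl⟩
        refine ⟨⟨fun α => d α.1, e, e'⟩, ?_⟩
        show Zset (extF g fun α => d α.1) e e' = Zset d e e'
        rw [key]
        exact ⟨rfl, rfl, fun α hα => by rw [extF_pos g _ α hα]⟩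
      · rintro ⟨q, rfl⟩
        exact ⟨extF g q.1, q.2.1, q.2.2, rfl⟩
    have Φinj : Function.Injective Φ := by
      rintro ⟨v, e, e'⟩ ⟨v2, e2, e2'⟩ hq
      obtain ⟨he, he', hd⟩ := (key _ _ _ _ _ _).1 hq
      refine Prod.ext ?_ (Prod.ext he he')
      funext α
      have := hd α.1 α.2
      rwa [extF_pos g v α.1 α.2, extF_pos g v2 α.1 α.2] at this
    rw [hrange, ← Set.image_univ, Set.ncard_image_of_injective _ Φinj, Set.ncard_univ]
    rw [Nat.card_prod, Nat.card_prod, Nat.card_fun, Nat.card_fun, Nat.card_zmod]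
    have hσ : Nat.card {α : Fin n // ∀ r, g r ≠ α} = n - t := by
      rw [Nat.card_eq_fintype_card]
      have h1 : Fintype.card {α : Fin n // ∀ r, g r ≠ α} =
          Fintype.card {α : Fin n // ¬ ∃ r, g r = α} :=
        Fintype.card_congr (Equiv.subtypeEquivRight fun α => by simp [not_exists])
      rw [h1, Fintype.card_subtype_compl]
      have h2 : Fintype.card {α : Fin n // ∃ r, g r = α} = t := by
        have h3 : Fintype.card {α : Fin n // ∃ r, g r = α} = Fintype.card (Set.range g) :=
          Fintype.card_congr (Equiv.subtypeEquivRight fun α => Iff.rfl)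
        rw [h3, Set.card_range_of_injective ginj, Fintype.card_fin]
      rw [h2, Fintype.card_fin]
    rw [hσ, Nat.card_eq_fintype_card, Fintype.card_fin]
    rw [← pow_succ, ← pow_add]
    congr 1
    omega
end

section
/- Let p be a prime, m ≥ 1, and 0 ≤ r ≤ m(p−1). Write m(p−1) − r = Q(p−1) + R with integers Q ≥ 0 and 0 ≤ R < p−1. Then the minimum Hamming distance of the generalized Reed–Muller code GRM_p(m,r) — equivalently, the minimum Hamming weight of a nonzero codeword — equals (R+1)·p^Q. -/
open Finset MvPolynomial

/-- The generalized Reed–Muller code `GRM_p(m,r)`: all evaluation vectors (at the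
base-`p` digit vectors of `0 ≤ x < p^m`) of polynomials over `Z_p` in `m` variables of
total degree at most `r` in which each variable occurs with exponent at most `p−1`. -/
def GRMcode (p m r : ℕ) : Set (Fin (p ^ m) → ZMod p) :=
  { v | ∃ f : MvPolynomial (Fin m) (ZMod p),
      f.totalDegree ≤ r ∧ (∀ i : Fin m, f.degreeOf i ≤ p - 1) ∧
      v = fun x : Fin (p ^ m) => MvPolynomial.eval (fun k : Fin m => digitZ p (x : ℕ) (k : ℕ)) f }

/-- `minProd p n = (n % (p-1) + 1) * p ^ (n / (p-1))`. -/
def minProd (p n : ℕ) : ℕ := (n % (p - 1) + 1) * p ^ (n / (p - 1))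

lemma minProd_spec {p q r' : ℕ} (hp : 2 ≤ p) (hr' : r' < p - 1) :
    minProd p (q * (p - 1) + r') = (r' + 1) * p ^ q := by
  have hs : 0 < p - 1 := by omega
  unfold minProd
  rw [mul_comm q, Nat.mul_add_mod, Nat.mod_eq_of_lt hr', Nat.mul_add_div hs,
    Nat.div_eq_of_lt hr', add_zero]

lemma minProd_add_le {p : ℕ} (hp : 2 ≤ p) {d : ℕ} (hd : d ≤ p - 1) (n : ℕ) :
    minProd p (n + d) ≤ (d + 1) * minProd p n := by
  have hs : 0 < p - 1 := by omega
  set s := p - 1 with hsdef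
  have hn : n = n / s * s + n % s := (Nat.div_add_mod' n s).symm
  have hr' : n % s < s := Nat.mod_lt _ hs
  set q := n / s
  set r' := n % s
  have hmul : (q + 1) * s = q * s + s := by ring
  rcases lt_or_ge (r' + d) s with h | h
  · have h1 : n + d = q * s + (r' + d) := by omega
    have h2 : minProd p (n + d) = (r' + d + 1) * p ^ q := by
      rw [h1]; exact minProd_spec hp (by omega)
    have h3 : minProd p n = (r' + 1) * p ^ q := by
      rw [hn]; exact minProd_spec hp hr'
    rw [h2, h3]
    have : r' + d + 1 ≤ (d + 1) * (r' + 1) := by nlinarith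
    calc (r' + d + 1) * p ^ q ≤ ((d + 1) * (r' + 1)) * p ^ q :=
          Nat.mul_le_mul_right _ this
      _ = (d + 1) * ((r' + 1) * p ^ q) := by ring
  · set c := r' + d - s with hc
    have hcs : c + s = r' + d := by omega
    have h1 : n + d = (q + 1) * s + c := by omega
    have h2 : minProd p (n + d) = (c + 1) * p ^ (q + 1) := by
      rw [h1]; exact minProd_spec hp (by omega)
    have h3 : minProd p n = (r' + 1) * p ^ q := by
      rw [hn]; exact minProd_spec hp hr'
    rw [h2, h3]
    have key : (c + 1) * p ≤ (d + 1) * (r' + 1) := by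
      have hps : p = s + 1 := by omega
      zify
      have h1 : (c : ℤ) + s = r' + d := by exact_mod_cast hcs
      have h2 : (d : ℤ) ≤ s := by exact_mod_cast hd
      have h3 : (r' : ℤ) < s := by exact_mod_cast hr'
      have h4 : (p : ℤ) = s + 1 := by exact_mod_cast hps
      nlinarith [mul_nonneg (sub_nonneg.mpr h2) (sub_nonneg.mpr h3.le)]
    calc (c + 1) * p ^ (q + 1) = ((c + 1) * p) * p ^ q := by ring
      _ ≤ ((d + 1) * (r' + 1)) * p ^ q := Nat.mul_le_mul_right _ key
      _ = (d + 1) * ((r' + 1) * p ^ q) := by ring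

lemma minProd_le_succ {p : ℕ} (hp : 2 ≤ p) (n : ℕ) : minProd p n ≤ minProd p (n + 1) := by
  have hs : 0 < p - 1 := by omega
  have hn : n = n / (p-1) * (p-1) + n % (p-1) := (Nat.div_add_mod' n (p-1)).symm
  have hr' : n % (p-1) < p - 1 := Nat.mod_lt _ hs
  set q := n / (p-1)
  set r' := n % (p-1)
  have hmul : (q + 1) * (p-1) = q * (p-1) + (p-1) := by ring
  have h3 : minProd p n = (r' + 1) * p ^ q := by rw [hn]; exact minProd_spec hp hr'
  rcases lt_or_ge (r' + 1) (p - 1) with h | h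
  · have h1 : n + 1 = q * (p-1) + (r' + 1) := by omega
    have h2 : minProd p (n + 1) = (r' + 2) * p ^ q := by
      rw [h1]; exact minProd_spec hp h
    rw [h2, h3]
    exact Nat.mul_le_mul_right _ (by omega)
  · have h1 : n + 1 = (q + 1) * (p-1) + 0 := by omega
    have h2 : minProd p (n + 1) = 1 * p ^ (q + 1) := by
      rw [h1]; exact minProd_spec hp (by omega)
    rw [h2, h3, one_mul, pow_succ, mul_comm (r' + 1)]
    exact Nat.mul_le_mul_left _ (by omega)

lemma minProd_mono {p : ℕ} (hp : 2 ≤ p) {a b : ℕ} (h : a ≤ b) : minProd p a ≤ minProd p b := by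
  induction b, h using Nat.le_induction with
  | base => exact le_rfl
  | succ b hb ih => exact ih.trans (minProd_le_succ hp b)

lemma minProd_le_prod {p : ℕ} (hp : 2 ≤ p) {ι : Type*} (s : Finset ι) (d : ι → ℕ)
    (hd : ∀ i ∈ s, d i ≤ p - 1) :
    minProd p (∑ i ∈ s, d i) ≤ ∏ i ∈ s, (d i + 1) := by
  induction s using Finset.cons_induction with
  | empty => simp [minProd]
  | cons a s ha ih =>
    rw [Finset.sum_cons, Finset.prod_cons, add_comm]
    calc minProd p ((∑ i ∈ s, d i) + d a) ≤ (d a + 1) * minProd p (∑ i ∈ s, d i) :=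
          minProd_add_le hp (hd a (Finset.mem_cons_self a s)) _
      _ ≤ (d a + 1) * ∏ i ∈ s, (d i + 1) :=
          Nat.mul_le_mul_left _ (ih fun i hi => hd i (Finset.mem_cons_of_mem hi))

lemma minProd_add_s {p : ℕ} (hp : 2 ≤ p) (n : ℕ) :
    minProd p (n + (p - 1)) = p * minProd p n := by
  have hs : 0 < p - 1 := by omega
  unfold minProd
  rw [Nat.add_mod_right, Nat.add_div_right _ hs, pow_succ]
  ring

lemma key_lemma (p : ℕ) [Fact p.Prime] :
    ∀ (m : ℕ) (f : MvPolynomial (Fin m) (ZMod p)), f ≠ 0 →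
    ∃ e ∈ f.support, ∏ i, (p - e i) ≤
      (univ.filter fun y : Fin m → ZMod p => eval y f ≠ 0).card := by
  intro m
  induction m with
  | zero =>
    intro f hf
    obtain ⟨c, rfl⟩ := (C_surjective (Fin 0)) f
    have hc : c ≠ 0 := by simpa using hf
    refine ⟨0, ?_, ?_⟩
    · simpa [mem_support_iff] using hc
    · have : (univ.filter fun y : Fin 0 → ZMod p => eval y (C c : MvPolynomial (Fin 0) (ZMod p)) ≠ 0)
          = univ := by
        ext y; simp [hc]
      rw [this]
      simp
  | succ m ih =>
    intro f hf
    set P := finSuccEquiv (ZMod p) m f with hPdef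
    have hP0 : P ≠ 0 := by
      simp only [hPdef, ne_eq, EmbeddingLike.map_eq_zero_iff]
      exact hf
    set d := P.natDegree with hd
    set g := P.leadingCoeff with hgdef
    have hg : g ≠ 0 := Polynomial.leadingCoeff_ne_zero.mpr hP0
    obtain ⟨e', he', hW⟩ := ih g hg
    refine ⟨e'.cons d, ?_, ?_⟩
    · rw [mem_support_iff, ← finSuccEquiv_coeff_coeff]
      exact mem_support_iff.mp he'
    · -- counting
      have hprod : ∏ i : Fin (m+1), (p - (e'.cons d) i)
          = (p - d) * ∏ i : Fin m, (p - e' i) := by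
        rw [Fin.prod_univ_succ]
        simp [Finsupp.cons_zero, Finsupp.cons_succ]
      rw [hprod]
      -- per-point bound
      have per : ∀ z : Fin m → ZMod p, eval z g ≠ 0 →
          p - d ≤ (univ.filter fun a : ZMod p => eval (Fin.cons a z) f ≠ 0).card := by
        intro z hz
        set q : Polynomial (ZMod p) := Polynomial.map (eval z) P with hq
        have heval : ∀ a : ZMod p, eval (Fin.cons a z) f = Polynomial.eval a q := by
          intro a; rw [hq, hPdef, eval_eq_eval_mv_eval']
        have hqc : q.coeff d = eval z g := by rw [hq, Polynomial.coeff_map]; rfl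
        have hq0 : q ≠ 0 := fun h => hz (by rw [← hqc, h, Polynomial.coeff_zero])
        have hdq : q.natDegree ≤ d := Polynomial.natDegree_map_le
        have hroots : (univ.filter fun a : ZMod p => Polynomial.eval a q = 0).card ≤ d := by
          have hsub : (univ.filter fun a : ZMod p => Polynomial.eval a q = 0) ⊆ q.roots.toFinset := by
            intro a ha
            rw [Multiset.mem_toFinset, Polynomial.mem_roots hq0]
            exact (mem_filter.mp ha).2
          calc (univ.filter fun a : ZMod p => Polynomial.eval a q = 0).card
              ≤ q.roots.toFinset.card := Finset.card_le_card hsub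
            _ ≤ Multiset.card q.roots := q.roots.toFinset_card_le
            _ ≤ q.natDegree := Polynomial.card_roots' q
            _ ≤ d := hdq
        have hcardZ : Fintype.card (ZMod p) = p := ZMod.card p
        have hsplit := Finset.card_filter_add_card_filter_not
          (s := (univ : Finset (ZMod p))) (p := fun a => Polynomial.eval a q = 0)
        simp only [Finset.card_univ, hcardZ] at hsplit
        have : (univ.filter fun a : ZMod p => eval (Fin.cons a z) f ≠ 0)
            = (univ.filter fun a : ZMod p => ¬ Polynomial.eval a q = 0) := by
          ext a; simp [heval a]
        rw [this]
        omega
      -- total count as a sum over z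
      have count : (univ.filter fun y : Fin (m+1) → ZMod p => eval y f ≠ 0).card
          = ∑ z : Fin m → ZMod p,
              (univ.filter fun a : ZMod p => eval (Fin.cons a z) f ≠ 0).card := by
        rw [Finset.card_filter]
        rw [← Fintype.sum_equiv ((Equiv.prodComm (Fin m → ZMod p) (ZMod p)).trans
              (Fin.consEquiv (fun _ : Fin (m+1) => ZMod p)))
            (fun x : (Fin m → ZMod p) × ZMod p =>
              if eval (Fin.cons x.2 x.1) f ≠ 0 then 1 else 0)
            (fun y => if eval y f ≠ 0 then 1 else 0) (fun x => rfl)]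
        rw [Fintype.sum_prod_type]
        exact Finset.sum_congr rfl fun z _ => (Finset.card_filter _ _).symm
      rw [count]
      set S := (univ.filter fun z : Fin m → ZMod p => eval z g ≠ 0) with hS
      calc (p - d) * ∏ i : Fin m, (p - e' i)
          ≤ (p - d) * S.card := Nat.mul_le_mul_left _ hW
        _ = S.card • (p - d) := by rw [smul_eq_mul, mul_comm]
        _ ≤ ∑ z ∈ S, (univ.filter fun a : ZMod p => eval (Fin.cons a z) f ≠ 0).card := by
            refine Finset.card_nsmul_le_sum S _ _ ?_
            intro z hz
            exact per z (by simpa [hS] using (mem_filter.mp hz).2)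
        _ ≤ ∑ z : Fin m → ZMod p,
              (univ.filter fun a : ZMod p => eval (Fin.cons a z) f ≠ 0).card := by
            exact Finset.sum_le_sum_of_subset (Finset.filter_subset _ _)

lemma digit_recon {p : ℕ} (hp : 2 ≤ p) :
    ∀ (m x : ℕ), x < p ^ m → ∑ k ∈ range m, (x / p ^ k % p) * p ^ k = x := by
  intro m
  induction m with
  | zero =>
    intro x hx
    simp only [pow_zero, Nat.lt_one_iff] at hx
    simp [hx]
  | succ m ih =>
    intro x hx
    rw [Finset.sum_range_succ']
    have hdiv : x / p < p ^ m := by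
      rw [Nat.div_lt_iff_lt_mul (by omega : 0 < p)]
      calc x < p ^ (m+1) := hx
        _ = p ^ m * p := pow_succ p m
    have step : ∀ k, x / p ^ (k+1) % p * p ^ (k+1) = p * ((x / p) / p ^ k % p * p ^ k) := by
      intro k
      have h1 : x / p ^ (k+1) = (x / p) / p ^ k := by
        rw [Nat.div_div_eq_div_mul, ← pow_succ']
      rw [h1]; ring
    calc (∑ k ∈ range m, x / p ^ (k+1) % p * p ^ (k+1)) + x / p ^ 0 % p * p ^ 0
        = (∑ k ∈ range m, p * ((x / p) / p ^ k % p * p ^ k)) + x % p := by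
          rw [Finset.sum_congr rfl fun k _ => step k]; simp
      _ = p * ((x / p)) + x % p := by rw [← Finset.mul_sum, ih (x / p) hdiv]
      _ = x := Nat.div_add_mod x p

lemma digit_bijective (p m : ℕ) [Fact p.Prime] :
    Function.Bijective (fun x : Fin (p ^ m) => fun k : Fin m => digitZ p (x : ℕ) (k : ℕ)) := by
  have hp : 2 ≤ p := (Fact.out : p.Prime).two_le
  rw [Fintype.bijective_iff_injective_and_card]
  constructor
  · intro x x' h
    have hdig : ∀ k : ℕ, k < m → (x : ℕ) / p ^ k % p = (x' : ℕ) / p ^ k % p := by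
      intro k hk
      have := congrFun h ⟨k, hk⟩
      simp only [digitZ] at this
      have h1 : (x : ℕ) / p ^ k % p < p := Nat.mod_lt _ (by omega)
      have h2 : (x' : ℕ) / p ^ k % p < p := Nat.mod_lt _ (by omega)
      have := congrArg ZMod.val this
      rwa [ZMod.val_natCast_of_lt h1, ZMod.val_natCast_of_lt h2] at this
    apply Fin.ext
    rw [← digit_recon hp m (x : ℕ) x.2, ← digit_recon hp m (x' : ℕ) x'.2]
    exact Finset.sum_congr rfl fun k hk => by
      rw [hdig k (Finset.mem_range.mp hk)]
  · simp [ZMod.card p]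

lemma norm_eq_count (p m : ℕ) [Fact p.Prime] (f : MvPolynomial (Fin m) (ZMod p)) :
    hammingNorm (fun x : Fin (p ^ m) => eval (fun k : Fin m => digitZ p (x : ℕ) (k : ℕ)) f)
      = (univ.filter fun y : Fin m → ZMod p => eval y f ≠ 0).card := by
  unfold hammingNorm
  refine Finset.card_bij (fun x _ => fun k : Fin m => digitZ p (x : ℕ) (k : ℕ)) ?_ ?_ ?_
  · intro x hx
    simp only [mem_filter, mem_univ, true_and] at hx ⊢
    exact hx
  · intro x hx x' hx' h
    exact (digit_bijective p m).1 h
  · intro y hy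
    obtain ⟨x, hx⟩ := (digit_bijective p m).2 y
    refine ⟨x, ?_, hx⟩
    simp only [mem_filter, mem_univ, true_and] at hy ⊢
    simpa [← hx] using hy

lemma div_eq_iff_aux {s : ℕ} (hs : 0 < s) (j i : ℕ) :
    j / s = i ↔ i * s ≤ j ∧ j < (i + 1) * s := by
  constructor
  · rintro rfl
    refine ⟨Nat.div_mul_le_self j s, ?_⟩
    have h1 : s * (j / s) + j % s = j := Nat.div_add_mod j s
    have h2 : j % s < s := Nat.mod_lt _ hs
    have h3 : (j / s + 1) * s = s * (j / s) + s := by ring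
    omega
  · rintro ⟨h1, h2⟩
    exact Nat.div_eq_of_lt_le h1 h2

/-- Number of linear factors attached to variable `i`. -/
def nFib (s r i : ℕ) : ℕ := ((range r).filter fun j => j / s = i).card

lemma nFib_le (s r i : ℕ) (hs : 0 < s) : nFib s r i ≤ s := by
  unfold nFib
  have hsub : (range r).filter (fun j => j / s = i) ⊆ Ico (i * s) ((i + 1) * s) := by
    intro j hj
    rw [mem_filter, mem_range] at hj
    rw [mem_Ico]
    exact ((div_eq_iff_aux hs j i).mp hj.2)
  calc ((range r).filter fun j => j / s = i).card ≤ (Ico (i * s) ((i + 1) * s)).card :=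
        Finset.card_le_card hsub
    _ = s := by rw [Nat.card_Ico]; have : (i+1)*s = i*s + s := by ring
                omega

lemma prod_count (p : ℕ) (hp : 2 ≤ p) :
    ∀ m r : ℕ, r ≤ m * (p - 1) →
    ∏ i ∈ range m, (p - nFib (p - 1) r i) = minProd p (m * (p - 1) - r) := by
  have hs : 0 < p - 1 := by omega
  intro m
  induction m with
  | zero =>
    intro r hr
    simp only [Nat.zero_mul, Nat.le_zero] at hr
    subst hr
    simp [minProd]
  | succ m ih =>
    intro r hr
    rw [Finset.prod_range_succ]
    have hms : (m + 1) * (p - 1) = m * (p - 1) + (p - 1) := by ring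
    rcases le_or_gt r (m * (p - 1)) with h | h
    · -- last variable not used
      have hN : nFib (p - 1) r m = 0 := by
        unfold nFib
        rw [Finset.card_eq_zero, Finset.filter_eq_empty_iff]
        intro j hj
        rw [mem_range] at hj
        intro hdiv
        have := (div_eq_iff_aux hs j m).mp hdiv
        omega
      rw [hN, ih r h, Nat.sub_zero]
      have harith : (m + 1) * (p - 1) - r = (m * (p - 1) - r) + (p - 1) := by omega
      rw [harith, minProd_add_s hp, mul_comm]
    · -- last variable partially used
      have h1 : ∀ i ∈ range m, p - nFib (p - 1) r i = 1 := by
        intro i hi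
        rw [mem_range] at hi
        have heq : (range r).filter (fun j => j / (p - 1) = i) = Ico (i * (p-1)) ((i+1) * (p-1)) := by
          ext j
          rw [mem_filter, mem_range, mem_Ico, div_eq_iff_aux hs]
          have h2 : (i + 1) * (p - 1) ≤ m * (p - 1) := Nat.mul_le_mul_right _ (by omega)
          omega
        have : nFib (p - 1) r i = p - 1 := by
          unfold nFib
          rw [heq, Nat.card_Ico]
          have : (i+1)*(p-1) = i*(p-1) + (p-1) := by ring
          omega
        omega
      rw [Finset.prod_congr rfl h1, Finset.prod_const_one, one_mul]
      have heq : (range r).filter (fun j => j / (p - 1) = m) = Ico (m * (p-1)) r := by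
        ext j
        rw [mem_filter, mem_range, mem_Ico, div_eq_iff_aux hs]
        omega
      have hN : nFib (p - 1) r m = r - m * (p - 1) := by
        unfold nFib; rw [heq, Nat.card_Ico]
      have hlt : (m + 1) * (p - 1) - r < p - 1 := by omega
      have hmp : minProd p ((m + 1) * (p - 1) - r)
          = (m + 1) * (p - 1) - r + 1 := by
        simpa using minProd_spec (q := 0) hp hlt
      rw [hN, hmp]
      omega

/-- index of the variable for the `j`-th linear factor -/
def widx {p m r : ℕ} (hp : 2 ≤ p) (hr : r ≤ m * (p - 1)) (j : Fin r) : Fin m :=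
  ⟨(j : ℕ) / (p - 1), by
    rw [Nat.div_lt_iff_lt_mul (by omega : 0 < p - 1)]
    exact lt_of_lt_of_le j.2 hr⟩

/-- constant for the `j`-th linear factor -/
def wcst (p : ℕ) {r : ℕ} (j : Fin r) : ZMod p := (((j : ℕ) % (p - 1) + 1 : ℕ) : ZMod p)

/-- the minimum-weight witness polynomial -/
noncomputable def witness (p m r : ℕ) (hp : 2 ≤ p) (hr : r ≤ m * (p - 1)) : MvPolynomial (Fin m) (ZMod p) :=
  ∏ j : Fin r, (X (widx hp hr j) - C (wcst p j))

lemma eval_witness {p m r : ℕ} (hp : 2 ≤ p) (hr : r ≤ m * (p - 1)) (y : Fin m → ZMod p) :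
    eval y (witness p m r hp hr) = ∏ j : Fin r, (y (widx hp hr j) - wcst p j) := by
  unfold witness
  rw [map_prod]
  simp

lemma totalDegree_witness {p m r : ℕ} [Fact p.Prime] (hp : 2 ≤ p) (hr : r ≤ m * (p - 1)) :
    (witness p m r hp hr).totalDegree ≤ r := by
  haveI : Fact (1 < p) := ⟨(Fact.out : p.Prime).one_lt⟩
  unfold witness
  refine (totalDegree_finset_prod _ _).trans ?_
  have h1 : ∀ j : Fin r, (X (widx hp hr j) - C (wcst p j)).totalDegree ≤ 1 := by
    intro j
    refine (totalDegree_sub _ _).trans ?_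
    rw [totalDegree_X, totalDegree_C]
    simp
  refine le_trans (Finset.sum_le_sum fun j (_ : j ∈ univ) => h1 j) ?_
  simp

lemma card_fiber {p r : ℕ} (i : ℕ) :
    (univ.filter fun j : Fin r => (j : ℕ) / (p - 1) = i).card = nFib (p - 1) r i := by
  unfold nFib
  refine Finset.card_bij (fun j _ => (j : ℕ)) ?_ ?_ ?_
  · intro j hj
    rw [mem_filter] at hj
    simp only [mem_filter, mem_range]
    exact ⟨j.2, hj.2⟩
  · intro j _ j' _ h
    exact Fin.ext h
  · intro k hk
    rw [mem_filter, mem_range] at hk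
    exact ⟨⟨k, hk.1⟩, by simp [hk.2], rfl⟩

lemma degreeOf_witness {p m r : ℕ} [Fact p.Prime] (hp : 2 ≤ p) (hr : r ≤ m * (p - 1)) (i : Fin m) :
    (witness p m r hp hr).degreeOf i ≤ p - 1 := by
  haveI : Fact (1 < p) := ⟨(Fact.out : p.Prime).one_lt⟩
  unfold witness
  refine (MvPolynomial.degreeOf_prod_le _ _ _).trans ?_
  have h1 : ∀ j : Fin r, degreeOf i (X (widx hp hr j) - C (wcst p j))
      ≤ if widx hp hr j = i then 1 else 0 := by
    intro j
    rw [degreeOf_le_iff]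
    intro e he
    have hsupp := MvPolynomial.support_sub _ (X (widx hp hr j)) (C (wcst p j)) he
    rw [Finset.mem_union] at hsupp
    rcases hsupp with h | h
    · rw [support_X, Finset.mem_singleton] at h
      subst h
      rcases eq_or_ne (widx hp hr j) i with heq | hne
      · simp [heq, Finsupp.single_apply]
      · simp [hne, Finsupp.single_apply]
    · rw [C_apply, support_monomial] at h
      split_ifs at h with h0
      · simp at h
      · rw [Finset.mem_singleton] at h
        subst h
        simp
  calc ∑ j : Fin r, degreeOf i (X (widx hp hr j) - C (wcst p j))
      ≤ ∑ j : Fin r, (if widx hp hr j = i then 1 else 0) := Finset.sum_le_sum fun j _ => h1 j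
    _ = (univ.filter fun j : Fin r => widx hp hr j = i).card := Finset.sum_boole _ _
    _ = (univ.filter fun j : Fin r => (j : ℕ) / (p - 1) = (i : ℕ)).card := by
        congr 1
        ext j
        simp only [mem_filter, mem_univ, true_and]
        constructor
        · intro h; rw [← h]; rfl
        · intro h; exact Fin.ext h
    _ = nFib (p - 1) r (i : ℕ) := card_fiber _
    _ ≤ p - 1 := nFib_le _ _ _ (by omega)

lemma wcst_inj {p r : ℕ} [Fact p.Prime] {j j' : Fin r}
    (hdiv : (j : ℕ) / (p - 1) = (j' : ℕ) / (p - 1)) (hc : wcst p j = wcst p j') : j = j' := by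
  have hp : 2 ≤ p := (Fact.out : p.Prime).two_le
  have h1 : (j : ℕ) % (p - 1) + 1 < p := by
    have := Nat.mod_lt (j : ℕ) (y := p - 1) (by omega)
    omega
  have h2 : (j' : ℕ) % (p - 1) + 1 < p := by
    have := Nat.mod_lt (j' : ℕ) (y := p - 1) (by omega)
    omega
  have := congrArg ZMod.val hc
  unfold wcst at this
  rw [ZMod.val_natCast_of_lt h1, ZMod.val_natCast_of_lt h2] at this
  have hd1 := Nat.div_add_mod (j : ℕ) (p - 1)
  have hd2 := Nat.div_add_mod (j' : ℕ) (p - 1)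
  rw [hdiv] at hd1
  apply Fin.ext
  omega

lemma card_witness {p m r : ℕ} [Fact p.Prime] (hp : 2 ≤ p) (hr : r ≤ m * (p - 1)) :
    (univ.filter fun y : Fin m → ZMod p => eval y (witness p m r hp hr) ≠ 0).card
      = minProd p (m * (p - 1) - r) := by
  classical
  set B : Fin m → Finset (ZMod p) := fun i =>
    (univ.filter fun j : Fin r => widx hp hr j = i).image (fun j => wcst p j) with hB
  have hset : (univ.filter fun y : Fin m → ZMod p => eval y (witness p m r hp hr) ≠ 0)
      = Fintype.piFinset fun i => univ \ B i := by
    ext y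
    rw [mem_filter, Fintype.mem_piFinset]
    simp only [mem_univ, true_and, Finset.mem_sdiff, hB, Finset.mem_image, mem_filter]
    rw [eval_witness hp hr, Finset.prod_ne_zero_iff]
    constructor
    · intro h i hex
      obtain ⟨j, hij, hcj⟩ := hex
      apply h j (mem_univ j)
      rw [hij, ← hcj, sub_self]
    · intro h j _ hzero
      exact h (widx hp hr j) ⟨j, rfl, (sub_eq_zero.mp hzero).symm⟩
  rw [hset, Fintype.card_piFinset]
  have hcard : ∀ i : Fin m, (univ \ B i).card = p - nFib (p - 1) r (i : ℕ) := by
    intro i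
    rw [Finset.card_sdiff_of_subset (Finset.subset_univ _), Finset.card_univ, ZMod.card]
    congr 1
    rw [hB]
    rw [Finset.card_image_of_injOn, ← card_fiber (p := p) (i : ℕ)]
    · congr 1
      ext j
      simp only [mem_filter, mem_univ, true_and]
      constructor
      · intro h; rw [← h]; rfl
      · intro h; exact Fin.ext h
    · intro j hj j' hj' hc
      rw [mem_coe, mem_filter] at hj hj'
      have : (j : ℕ) / (p - 1) = (j' : ℕ) / (p - 1) := by
        have e1 : widx hp hr j = i := hj.2
        have e2 : widx hp hr j' = i := hj'.2
        have := e1.trans e2.symm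
        exact congrArg Fin.val this
      exact wcst_inj this hc
  calc ∏ i : Fin m, (univ \ B i).card = ∏ i : Fin m, (p - nFib (p - 1) r (i : ℕ)) :=
        Finset.prod_congr rfl fun i _ => hcard i
    _ = ∏ i ∈ range m, (p - nFib (p - 1) r i) := Fin.prod_univ_eq_prod_range (fun i => p - nFib (p - 1) r i) m
    _ = minProd p (m * (p - 1) - r) := prod_count p hp m r hr

lemma weight_lower (p m r : ℕ) [Fact p.Prime] (hr : r ≤ m * (p - 1))
    (f : MvPolynomial (Fin m) (ZMod p)) (hf : f ≠ 0)
    (htd : f.totalDegree ≤ r) (hdeg : ∀ i, f.degreeOf i ≤ p - 1) :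
    minProd p (m * (p - 1) - r) ≤
      (univ.filter fun y : Fin m → ZMod p => eval y f ≠ 0).card := by
  have hp : 2 ≤ p := (Fact.out : p.Prime).two_le
  obtain ⟨e, he, hW⟩ := key_lemma p m f hf
  have he_i : ∀ i, e i ≤ p - 1 := fun i => (degreeOf_le_iff.mp (hdeg i)) e he
  have hsum_le : ∑ i, e i ≤ r := by
    have h1 : (e.sum fun _ c => c) ≤ f.totalDegree := le_totalDegree he
    have h2 : (e.sum fun _ c => c) = ∑ i, e i := by
      rw [Finsupp.sum_fintype]; intro; rfl
    omega
  have hterm : ∀ i : Fin m, p - e i = (p - 1 - e i) + 1 := by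
    intro i; have := he_i i; omega
  have hsum2 : ∑ i : Fin m, (p - 1 - e i) = m * (p - 1) - ∑ i, e i := by
    have h3 : ∑ i : Fin m, ((p - 1 - e i) + e i) = ∑ _i : Fin m, (p - 1) := by
      refine Finset.sum_congr rfl fun i _ => ?_
      have := he_i i; omega
    rw [Finset.sum_add_distrib] at h3
    simp only [Finset.sum_const, Finset.card_univ, Fintype.card_fin, smul_eq_mul] at h3
    have h4 : m * (p - 1) = (p - 1) * m := by ring
    omega
  calc minProd p (m * (p - 1) - r) ≤ minProd p (m * (p - 1) - ∑ i, e i) :=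
        minProd_mono hp (by omega)
    _ = minProd p (∑ i : Fin m, (p - 1 - e i)) := by rw [hsum2]
    _ ≤ ∏ i : Fin m, ((p - 1 - e i) + 1) := minProd_le_prod hp _ _ (fun i _ => by omega)
    _ = ∏ i : Fin m, (p - e i) := Finset.prod_congr rfl fun i _ => (hterm i).symm
    _ ≤ _ := hW

lemma zero_mem_GRM (p m r : ℕ) [Fact p.Prime] : (0 : Fin (p ^ m) → ZMod p) ∈ GRMcode p m r :=
  ⟨0, by simp, fun i => by simp, by funext x; simp⟩

lemma sub_mem_GRM {p m r : ℕ} [Fact p.Prime] {v v' : Fin (p ^ m) → ZMod p}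
    (h : v ∈ GRMcode p m r) (h' : v' ∈ GRMcode p m r) : v - v' ∈ GRMcode p m r := by
  obtain ⟨f, hf1, hf2, rfl⟩ := h
  obtain ⟨g, hg1, hg2, rfl⟩ := h'
  refine ⟨f - g, (totalDegree_sub f g).trans (max_le hf1 hg1), ?_, ?_⟩
  · intro i
    rw [degreeOf_le_iff]
    intro e he
    have hsupp := MvPolynomial.support_sub _ f g he
    rw [Finset.mem_union] at hsupp
    rcases hsupp with h | h
    · exact degreeOf_le_iff.mp (hf2 i) e h
    · exact degreeOf_le_iff.mp (hg2 i) e h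
  · funext x; simp

/-- Lemma 2, Kasami–Lin–Peterson: writing
`m(p−1) − r = Q(p−1) + R` with `0 ≤ R < p−1`, the minimum Hamming distance of
`GRM_p(m,r)` — equivalently the minimum Hamming weight of a nonzero codeword —
equals `(R+1)·p^Q`. -/
theorem statement10 (p m r Q R : ℕ) [Fact p.Prime] (hm : 1 ≤ m)
    (hr : r ≤ m * (p - 1)) (hR : R < p - 1)
    (hQR : m * (p - 1) - r = Q * (p - 1) + R) :
    IsLeast {w : ℕ | ∃ v ∈ GRMcode p m r, ∃ v' ∈ GRMcode p m r,
        v ≠ v' ∧ w = hammingDist v v'} ((R + 1) * p ^ Q) ∧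
    IsLeast {w : ℕ | ∃ v ∈ GRMcode p m r, v ≠ 0 ∧ w = hammingNorm v}
      ((R + 1) * p ^ Q) := by
  have hp : 2 ≤ p := (Fact.out : p.Prime).two_le
  have hW : minProd p (m * (p - 1) - r) = (R + 1) * p ^ Q := by
    rw [hQR]; exact minProd_spec hp hR
  set v₀ : Fin (p ^ m) → ZMod p :=
    fun x => eval (fun k : Fin m => digitZ p (x : ℕ) (k : ℕ)) (witness p m r hp hr) with hv₀
  have hv₀mem : v₀ ∈ GRMcode p m r :=
    ⟨witness p m r hp hr, totalDegree_witness hp hr, degreeOf_witness hp hr, rfl⟩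
  have hv₀norm : hammingNorm v₀ = (R + 1) * p ^ Q := by
    rw [hv₀, norm_eq_count, card_witness hp hr, hW]
  have hWpos : 0 < (R + 1) * p ^ Q := by positivity
  have hv₀ne : v₀ ≠ 0 := by
    intro h0
    rw [h0, hammingNorm_zero] at hv₀norm
    omega
  have hlow : ∀ w ∈ {w : ℕ | ∃ v ∈ GRMcode p m r, v ≠ 0 ∧ w = hammingNorm v},
      (R + 1) * p ^ Q ≤ w := by
    rintro w ⟨v, ⟨f, hf1, hf2, rfl⟩, hvne, rfl⟩
    have hfne : f ≠ 0 := by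
      intro h0; apply hvne; subst h0; funext x; simp
    rw [norm_eq_count, ← hW]
    exact weight_lower p m r hr f hfne hf1 hf2
  have hsecond : IsLeast {w : ℕ | ∃ v ∈ GRMcode p m r, v ≠ 0 ∧ w = hammingNorm v}
      ((R + 1) * p ^ Q) := ⟨⟨v₀, hv₀mem, hv₀ne, hv₀norm.symm⟩, hlow⟩
  refine ⟨?_, hsecond⟩
  have hseteq : {w : ℕ | ∃ v ∈ GRMcode p m r, ∃ v' ∈ GRMcode p m r,
        v ≠ v' ∧ w = hammingDist v v'}
      = {w : ℕ | ∃ v ∈ GRMcode p m r, v ≠ 0 ∧ w = hammingNorm v} := by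
    ext w
    constructor
    · rintro ⟨v, hv, v', hv', hne, rfl⟩
      exact ⟨v - v', sub_mem_GRM hv hv', sub_ne_zero_of_ne hne,
        by rw [hammingDist_comm, hammingDist_eq_hammingNorm, neg_add_eq_sub]⟩
    · rintro ⟨v, hv, hne, rfl⟩
      refine ⟨v, hv, 0, zero_mem_GRM p m r, hne, ?_⟩
      rw [hammingDist_zero_right]
  rw [hseteq]
  exact hsecond
end

section
/- Tang–Fan–Matsufuji bound: let z_0, z_1, …, z_{N−1} be N nonzero complex sequences of length L (N ≥ 1), and let 0 ≤ Z < L be such that φ(z_i, z_i)(u) = 0 for all i and all 1 ≤ u ≤ Z, and φ(z_i, z_j)(u) = 0 for all i ≠ j and all 0 ≤ u ≤ Z. Then N(Z+1) ≤ L. -/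
open Finset

/-- Periodic cross-correlation of two length-`L` complex sequences at integer shift `u`. -/
noncomputable def per (L : ℕ) (a b : ℕ → ℂ) (u : ℤ) : ℂ :=
  ∑ i ∈ Finset.range L, a i * (starRingEnd ℂ) (b (((i : ℤ) + u) % (L : ℤ)).toNat)

lemma per_natshift (L : ℕ) (a b : ℕ → ℂ) (d : ℕ) :
    per L a b (d : ℤ) = ∑ i ∈ Finset.range L, a i * (starRingEnd ℂ) (b ((i + d) % L)) := by
  unfold per
  refine Finset.sum_congr rfl fun i hi => ?_
  have h : (((i : ℤ) + d) % (L : ℤ)).toNat = (i + d) % L := by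
    have : ((i : ℤ) + d) = ((i + d : ℕ) : ℤ) := by push_cast; ring
    rw [this, ← Int.natCast_mod, Int.toNat_natCast]
  rw [h]

lemma sum_shift (L u : ℕ) (hu : u < L) (g : ℕ → ℂ) :
    ∑ k ∈ Finset.range L, g ((k + u) % L) = ∑ k ∈ Finset.range L, g k := by
  refine Finset.sum_nbij' (fun k => (k + u) % L) (fun k => (k + (L - u)) % L) ?_ ?_ ?_ ?_ ?_
  · intro k hk; exact Finset.mem_range.mpr (Nat.mod_lt _ (by omega))
  · intro k hk; exact Finset.mem_range.mpr (Nat.mod_lt _ (by omega))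
  · intro k hk
    simp only [Finset.mem_range] at hk
    show ((k + u) % L + (L - u)) % L = k
    rw [Nat.mod_add_mod]
    have : k + u + (L - u) = k + L := by omega
    rw [this, Nat.add_mod_right, Nat.mod_eq_of_lt hk]
  · intro k hk
    simp only [Finset.mem_range] at hk
    show ((k + (L - u)) % L + u) % L = k
    rw [Nat.mod_add_mod]
    have : k + (L - u) + u = k + L := by omega
    rw [this, Nat.add_mod_right, Nat.mod_eq_of_lt hk]
  · intro k hk; rfl

/-- Tang–Fan–Matsufuji bound: if `z₀,…,z_{N−1}` are nonzero
length-`L` complex sequences whose periodic autocorrelations vanish for shifts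
`1 ≤ u ≤ Z` and whose pairwise periodic cross-correlations vanish for shifts
`0 ≤ u ≤ Z` (with `Z < L`), then `N(Z+1) ≤ L`. -/
theorem statement16 (N Z L : ℕ) (hN : 1 ≤ N) (hZL : Z < L)
    (z : Fin N → ℕ → ℂ)
    (hnz : ∀ i : Fin N, ∃ x < L, z i x ≠ 0)
    (hauto : ∀ i : Fin N, ∀ u : ℕ, 1 ≤ u → u ≤ Z → per L (z i) (z i) (u : ℤ) = 0)
    (hcross : ∀ i j : Fin N, i ≠ j → ∀ u : ℕ, u ≤ Z → per L (z i) (z j) (u : ℤ) = 0) :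
    N * (Z + 1) ≤ L := by
  have hL : 0 < L := by omega
  -- the shifted vectors
  set f : Fin N × Fin (Z + 1) → EuclideanSpace ℂ (Fin L) :=
    fun p => WithLp.toLp 2 (fun k : Fin L => z p.1 ((k + p.2) % L)) with hf
  -- inner products compute to per
  have hinner : ∀ (i j : Fin N) (u w : Fin (Z+1)), (u : ℕ) ≤ w →
      (inner ℂ (f (i, u)) (f (j, w)) : ℂ)
        = (starRingEnd ℂ) (per L (z i) (z j) ((w : ℕ) - (u : ℕ) : ℕ)) := by
    intro i j u w huw
    rw [per_natshift, map_sum]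
    simp only [PiLp.inner_apply, RCLike.inner_apply, map_mul, RingHom.coe_comp,
      RingHomCompTriple.comp_apply, RingHom.id_apply, Complex.conj_conj]
    rw [show (∑ x, (f (j, w)).ofLp x * (starRingEnd ℂ) ((f (i, u)).ofLp x)) = ∑ x : Fin L, (starRingEnd ℂ) (z i ((x + u) % L)) * z j ((x + w) % L) from Finset.sum_congr rfl fun x _ => mul_comm _ _]
    rw [Fin.sum_univ_eq_sum_range (fun k => (starRingEnd ℂ) (z i ((k + u) % L)) * z j ((k + w) % L))]
    rw [← sum_shift L u (by omega) (fun m => (starRingEnd ℂ) (z i m) * z j ((m + ((w:ℕ) - (u:ℕ))) % L))]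
    refine Finset.sum_congr rfl fun k hk => ?_
    congr 2
    rw [Nat.mod_add_mod]
    congr 1
    omega
  -- each f p is nonzero
  have hne : ∀ p, f p ≠ 0 := by
    rintro ⟨i, u⟩ h
    obtain ⟨x, hx, hxz⟩ := hnz i
    have hu : (u : ℕ) < L := by have := u.isLt; omega
    have hk : (x + (L - u)) % L < L := Nat.mod_lt _ hL
    have := congrFun (congrArg WithLp.ofLp h) (⟨(x + (L - u)) % L, hk⟩ : Fin L)
    simp only [hf] at this
    rw [Nat.mod_add_mod] at this
    have hx' : x + (L - u) + u = x + L := by omega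
    rw [hx', Nat.add_mod_right, Nat.mod_eq_of_lt hx] at this
    exact hxz this
  -- orthogonality
  have horth : ∀ p q : Fin N × Fin (Z+1), p ≠ q → (inner ℂ (f p) (f q) : ℂ) = 0 := by
    have key : ∀ (i j : Fin N) (u w : Fin (Z+1)), (i, u) ≠ (j, w) → (u : ℕ) ≤ (w : ℕ) →
        (inner ℂ (f (i, u)) (f (j, w)) : ℂ) = 0 := by
      intro i j u w hne huw
      rw [hinner i j u w huw]
      by_cases hij : i = j
      · subst hij
        have huw' : (u : ℕ) ≠ (w : ℕ) := by
          intro h; exact hne (by simp [Prod.ext_iff, Fin.ext_iff, h])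
        rw [hauto i ((w:ℕ) - (u:ℕ)) (by omega) (by have := w.isLt; omega)]
        simp
      · rw [hcross i j hij ((w:ℕ) - (u:ℕ)) (by have := w.isLt; omega)]
        simp
    rintro ⟨i, u⟩ ⟨j, w⟩ hpq
    rcases le_total (u : ℕ) (w : ℕ) with h | h
    · exact key i j u w hpq h
    · rw [← inner_conj_symm, key j i w u (fun h' => hpq h'.symm) h]
      simp
  have hli : LinearIndependent ℂ f :=
    linearIndependent_of_ne_zero_of_inner_eq_zero hne horth
  have hcard := hli.fintype_card_le_finrank
  simpa [finrank_euclideanSpace_fin, Fintype.card_prod] using hcard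
end
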